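/- arXiv:2504.04308 — 10 statements merged into one kernel-verified Lean document; each statement's English description precedes it below -/
import Mathlib

section
/- Suppose W_k = [[P_k, 0],[0ᵀ, 0]], W_q = [[P_q, 0],[0ᵀ, 0]] and W_v = [[0_{d×d}, 0],[0ᵀ, 1]] in (d+1)×(d+1) block form, where P_k, P_q ∈ ℝ^{d×d}. Let Ω ∈ ℝ^{n×d} be the matrix whose i-th row is g_{i:n+1}ᵀ for i ∈ {1,…,n}. Then the (d+1)-th entry of the GLA output o_{n+1} equals xᵀ P_q ((X P_k) ⊙ Ω)ᵀ y. -/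
open Matrix Finset

/-- GLA state recursion (0-indexed tokens): `glaState G v k 0 = 0` and
`glaState G v k (t+1) = G t ⊙ glaState G v k t + v t (k t)ᵀ`, so that
`glaState G v k t` is the paper's state `S_t` where token `i` of the paper
(for `i ∈ {1, …, n+1}`) corresponds to index `i - 1` here. -/
noncomputable def glaState {d : ℕ}
    (G : ℕ → Matrix (Fin (d + 1)) (Fin (d + 1)) ℝ)
    (v k : ℕ → (Fin (d + 1) → ℝ)) : ℕ → Matrix (Fin (d + 1)) (Fin (d + 1)) ℝ
  | 0 => 0
  | t + 1 => (G t).hadamard (glaState G v k t) + vecMulVec (v t) (k t)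

lemma finSumFinEquiv_symm_castSucc {d : ℕ} (j : Fin d) :
    finSumFinEquiv.symm (j.castSucc) = Sum.inl j := by
  simp [Fin.castSucc, finSumFinEquiv_symm_apply_castAdd]

lemma finSumFinEquiv_symm_last' (d : ℕ) :
    finSumFinEquiv.symm (Fin.last d) = Sum.inr (0 : Fin 1) := by
  rw [Equiv.symm_apply_eq]; ext; simp

lemma gla_lastRow {d : ℕ} (G : ℕ → Matrix (Fin (d + 1)) (Fin (d + 1)) ℝ)
    (v k : ℕ → (Fin (d + 1) → ℝ)) (j : Fin (d + 1)) (m : ℕ) :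
    glaState G v k m (Fin.last d) j
      = ∑ i ∈ Finset.range m, v i (Fin.last d) * k i j
          * ∏ t ∈ Finset.Ico (i + 1) m, G t (Fin.last d) j := by
  induction m with
  | zero => simp [glaState]
  | succ m ih =>
    rw [glaState]
    simp only [Matrix.add_apply, Matrix.hadamard_apply, Matrix.vecMulVec_apply, ih]
    rw [Finset.sum_range_succ]
    simp only [Finset.Ico_self, Finset.prod_empty, mul_one, Finset.mul_sum]
    congr 1
    apply Finset.sum_congr rfl
    intro i hi
    rw [Finset.prod_Ico_succ_top (Nat.succ_le_of_lt (Finset.mem_range.mp hi))]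
    ring

/-- With `W_k = [[P_k,0],[0,0]]`, `W_q = [[P_q,0],[0,0]]`,
`W_v = [[0,0],[0,1]]`, the `(d+1)`-th entry of the GLA output `o_{n+1}` equals
`xᵀ P_q ((X P_k) ⊙ Ω)ᵀ y`, where the `i`-th row of `Ω` is `g_{i:n+1}ᵀ`. -/
theorem stmt0 (n d : ℕ) (hn : 0 < n) (hd : 0 < d)
    (x : Fin n → Fin d → ℝ) (yv : Fin n → ℝ) (xq : Fin d → ℝ)
    (Pk Pq : Matrix (Fin d) (Fin d) ℝ)
    (Wk Wq Wv : Matrix (Fin (d + 1)) (Fin (d + 1)) ℝ)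
    (hWk : Wk = Matrix.reindex finSumFinEquiv finSumFinEquiv
      (Matrix.fromBlocks Pk 0 0 (0 : Matrix (Fin 1) (Fin 1) ℝ)))
    (hWq : Wq = Matrix.reindex finSumFinEquiv finSumFinEquiv
      (Matrix.fromBlocks Pq 0 0 (0 : Matrix (Fin 1) (Fin 1) ℝ)))
    (hWv : Wv = Matrix.reindex finSumFinEquiv finSumFinEquiv
      (Matrix.fromBlocks (0 : Matrix (Fin d) (Fin d) ℝ) 0 0 (1 : Matrix (Fin 1) (Fin 1) ℝ)))
    -- the gating matrices `G_1, …, G_{n+1}`, with `G i` being the paper's `G_{i+1}`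
    (G : ℕ → Matrix (Fin (d + 1)) (Fin (d + 1)) ℝ)
    -- the tokens `z_1, …, z_{n+1}`, with `z i` being the paper's `z_{i+1}`
    (z : ℕ → (Fin (d + 1) → ℝ))
    (hz : ∀ i : Fin n, z i = Fin.snoc (x i) (yv i))
    (hzq : z n = Fin.snoc xq 0)
    -- Ω ∈ ℝ^{n×d}: the paper's row `i ∈ {1,…,n}` (here row `i-1`) is `g_{i:n+1}ᵀ`,
    -- where `g_{i:n+1} = g_{i+1} ⊙ ⋯ ⊙ g_{n+1}` and `g_j` consists of the first `d`
    -- entries of the last row of `G_j`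
    (Ω : Matrix (Fin n) (Fin d) ℝ)
    (hΩ : ∀ (i : Fin n) (j : Fin d),
      Ω i j = ∏ t ∈ Finset.Icc ((i : ℕ) + 1) n, G t (Fin.last d) j.castSucc)
    -- the output `o_{n+1}`
    (o : Fin (d + 1) → ℝ)
    (ho : o = glaState G (fun t => Wvᵀ *ᵥ z t) (fun t => Wkᵀ *ᵥ z t) (n + 1)
      *ᵥ (Wqᵀ *ᵥ z n)) :
    o (Fin.last d)
      = xq ⬝ᵥ (Pq *ᵥ (((Matrix.of x * Pk).hadamard Ω)ᵀ *ᵥ yv)) := by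
  -- entry facts about the weight matrices
  have hWkcc : ∀ (l j : Fin d), Wk l.castSucc j.castSucc = Pk l j := by
    intro l j
    simp [hWk, Matrix.reindex_apply, Matrix.submatrix_apply, finSumFinEquiv_symm_castSucc]
  have hWklc : ∀ j : Fin d, Wk (Fin.last d) j.castSucc = 0 := by
    intro j
    simp [hWk, Matrix.reindex_apply, Matrix.submatrix_apply, finSumFinEquiv_symm_castSucc,
      finSumFinEquiv_symm_last']
  have hWqcc : ∀ (l j : Fin d), Wq l.castSucc j.castSucc = Pq l j := by
    intro l j
    simp [hWq, Matrix.reindex_apply, Matrix.submatrix_apply, finSumFinEquiv_symm_castSucc]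
  have hWqlc : ∀ j : Fin d, Wq (Fin.last d) j.castSucc = 0 := by
    intro j
    simp [hWq, Matrix.reindex_apply, Matrix.submatrix_apply, finSumFinEquiv_symm_castSucc,
      finSumFinEquiv_symm_last']
  -- value vector: first d coords are 0, last coord is z t (last)
  have hv : ∀ t, (Wvᵀ *ᵥ z t) (Fin.last d) = z t (Fin.last d) := by
    intro t
    simp only [Matrix.mulVec, dotProduct, Matrix.transpose_apply]
    rw [Fin.sum_univ_castSucc]
    have h1 : ∀ l : Fin d, Wv l.castSucc (Fin.last d) = 0 := by
      intro l
      simp [hWv, Matrix.reindex_apply, Matrix.submatrix_apply, finSumFinEquiv_symm_castSucc,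
        finSumFinEquiv_symm_last']
    have h2 : Wv (Fin.last d) (Fin.last d) = 1 := by
      simp [hWv, Matrix.reindex_apply, Matrix.submatrix_apply, finSumFinEquiv_symm_last']
    simp [h1, h2]
  -- key vector at castSucc coords
  have hk : ∀ (i : Fin n) (j : Fin d),
      (Wkᵀ *ᵥ z i) j.castSucc = (Matrix.of x * Pk) i j := by
    intro i j
    simp only [Matrix.mulVec, dotProduct, Matrix.transpose_apply]
    rw [Fin.sum_univ_castSucc]
    simp [hWkcc, hWklc, hz i, Matrix.mul_apply, mul_comm]
  -- query vector
  have hq : ∀ j : Fin d, (Wqᵀ *ᵥ z n) j.castSucc = ∑ l, Pq l j * xq l := by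
    intro j
    simp only [Matrix.mulVec, dotProduct, Matrix.transpose_apply]
    rw [Fin.sum_univ_castSucc]
    simp [hWqcc, hWqlc, hzq]
  have hql : (Wqᵀ *ᵥ z n) (Fin.last d) = 0 := by
    simp only [Matrix.mulVec, dotProduct, Matrix.transpose_apply]
    have h1 : ∀ a : Fin (d + 1), Wq a (Fin.last d) = 0 := by
      intro a
      refine Fin.lastCases ?_ ?_ a
      · simp [hWq, Matrix.reindex_apply, Matrix.submatrix_apply, finSumFinEquiv_symm_last']
      · intro l
        simp [hWq, Matrix.reindex_apply, Matrix.submatrix_apply, finSumFinEquiv_symm_castSucc,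
          finSumFinEquiv_symm_last']
    simp [h1]
  -- last row of the final state at castSucc coords
  have hS : ∀ j : Fin d,
      glaState G (fun t => Wvᵀ *ᵥ z t) (fun t => Wkᵀ *ᵥ z t) (n + 1) (Fin.last d) j.castSucc
        = ∑ i : Fin n, yv i * ((Matrix.of x * Pk) i j * Ω i j) := by
    intro j
    rw [gla_lastRow, Finset.sum_range_succ]
    have hzl : z n (Fin.last d) = 0 := by simp [hzq]
    rw [hv n, hzl, zero_mul, zero_mul, add_zero]
    rw [← Fin.sum_univ_eq_sum_range]
    apply Finset.sum_congr rfl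
    intro i _
    rw [hv (i : ℕ), hk i j, hΩ i j]
    have : z (i : ℕ) (Fin.last d) = yv i := by simp [hz i]
    rw [this]
    have hI : Finset.Ico ((i : ℕ) + 1) (n + 1) = Finset.Icc ((i : ℕ) + 1) n := by
      rw [Finset.Ico_add_one_right_eq_Icc]
    rw [hI]
    ring
  -- now compute both sides
  subst ho
  rw [Matrix.mulVec, dotProduct]
  rw [Fin.sum_univ_castSucc]
  rw [hql, mul_zero, add_zero]
  simp only [hS, hq]
  rw [dotProduct]
  simp only [Matrix.mulVec, dotProduct, Matrix.transpose_apply, Matrix.hadamard_apply]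
  simp only [Finset.mul_sum, Finset.sum_mul]
  conv_rhs => rw [Finset.sum_comm]
  apply Finset.sum_congr rfl
  intro j _
  apply Finset.sum_congr rfl
  intro l _
  apply Finset.sum_congr rfl
  intro i _
  ring
end

section
/- Suppose W_k = [[P_k, 0],[0ᵀ, 0]], W_q = [[P_q, 0],[0ᵀ, 0]] and W_v = [[0_{d×d}, 0],[0ᵀ, 1]] in (d+1)×(d+1) block form, where P_k, P_q ∈ ℝ^{d×d}, and suppose that for each i ∈ {1,…,n+1} there is a scalar g_i ∈ ℝ such that the first d entries of the last row of G_i all equal g_i. Then the (d+1)-th entry of the GLA output o_{n+1} equals xᵀ P Xᵀ (ω ⊙ y), where P = P_q P_kᵀ and ω ∈ ℝⁿ has entries ω_i = g_{i+1} · g_{i+2} ⋯ g_{n+1}. -/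
open Matrix Finset

lemma gla_last_row {d : ℕ} (G : ℕ → Matrix (Fin (d+1)) (Fin (d+1)) ℝ)
    (v k : ℕ → Fin (d+1) → ℝ) (g : ℕ → ℝ) (m : ℕ)
    (hg : ∀ s < m, ∀ j : Fin d, G s (Fin.last d) j.castSucc = g s) (j : Fin d) :
    glaState G v k m (Fin.last d) j.castSucc
      = ∑ t ∈ range m, (∏ s ∈ Ico (t+1) m, g s) * (v t (Fin.last d) * k t j.castSucc) := by
  induction m with
  | zero => simp [glaState]
  | succ m ih =>
    rw [glaState]
    simp only [Matrix.add_apply, Matrix.hadamard_apply, vecMulVec_apply]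
    rw [hg m (Nat.lt_succ_self m) j,
      ih (fun s hs => hg s (hs.trans (Nat.lt_succ_self m)))]
    rw [Finset.sum_range_succ, Finset.mul_sum]
    congr 1
    · refine Finset.sum_congr rfl fun t ht => ?_
      rw [Finset.prod_Ico_succ_top (by have := Finset.mem_range.mp ht; omega : t+1 ≤ m)]
      ring
    · simp

lemma blk_cc {d : ℕ} (A : Matrix (Fin d) (Fin d) ℝ) (D : Matrix (Fin 1) (Fin 1) ℝ)
    (i j : Fin d) :
    (Matrix.reindex finSumFinEquiv finSumFinEquiv (Matrix.fromBlocks A 0 0 D))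
      i.castSucc j.castSucc = A i j := by
  have h : ∀ a : Fin d, (a.castSucc : Fin (d+1)) = finSumFinEquiv (Sum.inl a) := fun a => rfl
  rw [h i, h j]; simp

lemma blk_cl {d : ℕ} (A : Matrix (Fin d) (Fin d) ℝ) (D : Matrix (Fin 1) (Fin 1) ℝ)
    (i : Fin d) :
    (Matrix.reindex finSumFinEquiv finSumFinEquiv (Matrix.fromBlocks A 0 0 D))
      i.castSucc (Fin.last d) = 0 := by
  have h : (i.castSucc : Fin (d+1)) = finSumFinEquiv (Sum.inl i) := rfl
  have hl : (Fin.last d) = finSumFinEquiv (Sum.inr (0 : Fin 1)) := by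
    simp [finSumFinEquiv_apply_right]; ext; simp
  rw [h, hl]; simp

lemma blk_lc {d : ℕ} (A : Matrix (Fin d) (Fin d) ℝ) (D : Matrix (Fin 1) (Fin 1) ℝ)
    (j : Fin d) :
    (Matrix.reindex finSumFinEquiv finSumFinEquiv (Matrix.fromBlocks A 0 0 D))
      (Fin.last d) j.castSucc = 0 := by
  have h : (j.castSucc : Fin (d+1)) = finSumFinEquiv (Sum.inl j) := rfl
  have hl : (Fin.last d) = finSumFinEquiv (Sum.inr (0 : Fin 1)) := by
    simp [finSumFinEquiv_apply_right]; ext; simp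
  rw [h, hl]; simp

lemma blk_ll {d : ℕ} (A : Matrix (Fin d) (Fin d) ℝ) (D : Matrix (Fin 1) (Fin 1) ℝ) :
    (Matrix.reindex finSumFinEquiv finSumFinEquiv (Matrix.fromBlocks A 0 0 D))
      (Fin.last d) (Fin.last d) = D 0 0 := by
  have hl : (Fin.last d) = finSumFinEquiv (Sum.inr (0 : Fin 1)) := by
    simp [finSumFinEquiv_apply_right]; ext; simp
  rw [hl]; simp

/-- With the block weight construction and scalar gating
(the first `d` entries of the last row of `G_i` all equal to a scalar `g_i`),
the `(d+1)`-th entry of the GLA output `o_{n+1}` equals `xᵀ P Xᵀ (ω ⊙ y)`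
where `P = P_q P_kᵀ` and `ω_i = g_{i+1} ⋯ g_{n+1}`. -/
theorem stmt1 (n d : ℕ) (hn : 0 < n) (hd : 0 < d)
    (x : Fin n → Fin d → ℝ) (yv : Fin n → ℝ) (xq : Fin d → ℝ)
    (Pk Pq : Matrix (Fin d) (Fin d) ℝ)
    (Wk Wq Wv : Matrix (Fin (d + 1)) (Fin (d + 1)) ℝ)
    (hWk : Wk = Matrix.reindex finSumFinEquiv finSumFinEquiv
      (Matrix.fromBlocks Pk 0 0 (0 : Matrix (Fin 1) (Fin 1) ℝ)))
    (hWq : Wq = Matrix.reindex finSumFinEquiv finSumFinEquiv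
      (Matrix.fromBlocks Pq 0 0 (0 : Matrix (Fin 1) (Fin 1) ℝ)))
    (hWv : Wv = Matrix.reindex finSumFinEquiv finSumFinEquiv
      (Matrix.fromBlocks (0 : Matrix (Fin d) (Fin d) ℝ) 0 0 (1 : Matrix (Fin 1) (Fin 1) ℝ)))
    -- the gating matrices `G_1, …, G_{n+1}`, with `G i` being the paper's `G_{i+1}`
    (G : ℕ → Matrix (Fin (d + 1)) (Fin (d + 1)) ℝ)
    -- scalar gating: `g i` is the paper's scalar `g_{i+1}`, for `i ∈ {0, …, n}`
    (g : ℕ → ℝ)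
    (hG : ∀ i : ℕ, i ≤ n → ∀ j : Fin d, G i (Fin.last d) j.castSucc = g i)
    -- the tokens `z_1, …, z_{n+1}`, with `z i` being the paper's `z_{i+1}`
    (z : ℕ → (Fin (d + 1) → ℝ))
    (hz : ∀ i : Fin n, z i = Fin.snoc (x i) (yv i))
    (hzq : z n = Fin.snoc xq 0)
    -- the output `o_{n+1}`
    (o : Fin (d + 1) → ℝ)
    (ho : o = glaState G (fun t => Wvᵀ *ᵥ z t) (fun t => Wkᵀ *ᵥ z t) (n + 1)
      *ᵥ (Wqᵀ *ᵥ z n))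
    -- the weighting vector: `ω i` is the paper's `ω_{i+1} = g_{i+2} ⋯ g_{n+1}`
    (ω : Fin n → ℝ)
    (hω : ∀ i : Fin n, ω i = ∏ t ∈ Finset.Icc ((i : ℕ) + 1) n, g t) :
    o (Fin.last d)
      = xq ⬝ᵥ ((Pq * Pkᵀ) *ᵥ ((Matrix.of x)ᵀ *ᵥ fun i => ω i * yv i)) := by
  subst hWk hWq hWv ho
  -- entry facts about the key/value/query vectors
  have hv : ∀ t : ℕ, ((Matrix.reindex finSumFinEquiv finSumFinEquiv
      (Matrix.fromBlocks (0 : Matrix (Fin d) (Fin d) ℝ) 0 0 (1 : Matrix (Fin 1) (Fin 1) ℝ)))ᵀ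
      *ᵥ z t) (Fin.last d) = z t (Fin.last d) := by
    intro t
    simp only [Matrix.mulVec, dotProduct, Matrix.transpose_apply]
    rw [Fin.sum_univ_castSucc]
    simp [blk_cl, blk_ll]
  have hk : ∀ t : ℕ, ∀ j : Fin d, ((Matrix.reindex finSumFinEquiv finSumFinEquiv
      (Matrix.fromBlocks Pk 0 0 (0 : Matrix (Fin 1) (Fin 1) ℝ)))ᵀ
      *ᵥ z t) j.castSucc = ∑ i : Fin d, Pk i j * z t i.castSucc := by
    intro t j
    simp only [Matrix.mulVec, dotProduct, Matrix.transpose_apply]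
    rw [Fin.sum_univ_castSucc]
    simp [blk_cc, blk_lc]
  have hq : ∀ j : Fin d, ((Matrix.reindex finSumFinEquiv finSumFinEquiv
      (Matrix.fromBlocks Pq 0 0 (0 : Matrix (Fin 1) (Fin 1) ℝ)))ᵀ
      *ᵥ z n) j.castSucc = ∑ i : Fin d, Pq i j * xq i := by
    intro j
    simp only [Matrix.mulVec, dotProduct, Matrix.transpose_apply]
    rw [Fin.sum_univ_castSucc]
    simp [blk_cc, blk_lc, hzq]
  have hql : ((Matrix.reindex finSumFinEquiv finSumFinEquiv
      (Matrix.fromBlocks Pq 0 0 (0 : Matrix (Fin 1) (Fin 1) ℝ)))ᵀ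
      *ᵥ z n) (Fin.last d) = 0 := by
    simp only [Matrix.mulVec, dotProduct, Matrix.transpose_apply]
    rw [Fin.sum_univ_castSucc]
    simp [blk_cl, blk_ll]
  -- the last row of the final state
  have hrow := gla_last_row G
    (fun t => (Matrix.reindex finSumFinEquiv finSumFinEquiv
      (Matrix.fromBlocks (0 : Matrix (Fin d) (Fin d) ℝ) 0 0 (1 : Matrix (Fin 1) (Fin 1) ℝ)))ᵀ *ᵥ z t)
    (fun t => (Matrix.reindex finSumFinEquiv finSumFinEquiv
      (Matrix.fromBlocks Pk 0 0 (0 : Matrix (Fin 1) (Fin 1) ℝ)))ᵀ *ᵥ z t)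
    g (n+1) (fun s hs j => hG s (Nat.lt_succ_iff.mp hs) j)
  -- expand the output
  rw [Matrix.mulVec, dotProduct]
  rw [Fin.sum_univ_castSucc]
  rw [hql, mul_zero, add_zero]
  have key : ∀ j : Fin d,
      glaState G
        (fun t => (Matrix.reindex finSumFinEquiv finSumFinEquiv
          (Matrix.fromBlocks (0 : Matrix (Fin d) (Fin d) ℝ) 0 0 (1 : Matrix (Fin 1) (Fin 1) ℝ)))ᵀ *ᵥ z t)
        (fun t => (Matrix.reindex finSumFinEquiv finSumFinEquiv
          (Matrix.fromBlocks Pk 0 0 (0 : Matrix (Fin 1) (Fin 1) ℝ)))ᵀ *ᵥ z t)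
        (n+1) (Fin.last d) j.castSucc
        = ∑ t : Fin n, ω t * (yv t * ∑ i : Fin d, Pk i j * x t i) := by
    intro j
    rw [hrow j, Finset.sum_range_succ]
    beta_reduce
    rw [hv n, hzq]
    simp only [Fin.snoc_last, zero_mul, mul_zero, add_zero]
    rw [Finset.sum_range fun t =>
      (∏ s ∈ Ico (t+1) (n+1), g s) *
        ((((Matrix.reindex finSumFinEquiv finSumFinEquiv
          (Matrix.fromBlocks (0 : Matrix (Fin d) (Fin d) ℝ) 0 0 (1 : Matrix (Fin 1) (Fin 1) ℝ)))ᵀ *ᵥ z t) (Fin.last d)) *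
        (((Matrix.reindex finSumFinEquiv finSumFinEquiv
          (Matrix.fromBlocks Pk 0 0 (0 : Matrix (Fin 1) (Fin 1) ℝ)))ᵀ *ᵥ z t) j.castSucc))]
    refine Finset.sum_congr rfl fun t _ => ?_
    rw [hv t, hk t j, hz t, hω t]
    simp only [Fin.snoc_last, Fin.snoc_castSucc]
    rw [Finset.Ico_add_one_right_eq_Icc]
  have step : ∀ j : Fin d, _ = _ := fun j => congrArg₂ (· * ·) (key j) (hq j)
  rw [Finset.sum_congr rfl fun j _ => step j]
  simp only [Matrix.mulVec, dotProduct, Matrix.mul_apply, Matrix.transpose_apply,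
    Matrix.of_apply]
  simp only [Finset.mul_sum, Finset.sum_mul]
  rw [Finset.sum_comm]
  conv_lhs => enter [2, a]; rw [Finset.sum_comm]
  conv_lhs => enter [2, a, 2, t]; rw [Finset.sum_comm]
  conv_lhs => enter [2, a]; rw [Finset.sum_comm]
  refine Finset.sum_congr rfl fun a _ => Finset.sum_congr rfl fun i _ =>
    Finset.sum_congr rfl fun t _ => Finset.sum_congr rfl fun j _ => by ring
end

section
/- Define vectors β_{i,ℓ} ∈ ℝ^d (for i ∈ {1,…,n}) and β̂_ℓ ∈ ℝ^d by β_{i,0} = β̂_0 = 0 and, for ℓ = 1,…,L, the recursions β_{i,ℓ} = β_{i,ℓ−1} − P_{q,ℓ}((X_ℓᵀ M_i (ŷ_{ℓ−1} − y)) ⊘ g_{i:n+1}) and β̂_ℓ = (1 − α_ℓ) β̂_{ℓ−1} − P_{q,ℓ} X_ℓᵀ (ŷ_{ℓ−1} − y), where ŷ_{ℓ−1} = (x_1ᵀβ_{1,ℓ−1}, …, x_nᵀβ_{n,ℓ−1})ᵀ ∈ ℝⁿ and α_ℓ = xᵀ P_{q,ℓ} P_{k,ℓ}ᵀ x. Then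 for every ℓ ∈ {0, 1, …, L}: the first d entries of the i-th row of Z_{ℓ+1} equal x_iᵀ for i ≤ n and xᵀ for i = n+1; the (d+1)-th entry of the i-th row of Z_{ℓ+1} equals y_i − x_iᵀ β_{i,ℓ} for every i ∈ {1,…,n}; and the (d+1)-th entry of the (n+1)-th row of Z_{ℓ+1} equals −xᵀ β̂_ℓ. -/
open Matrix Finset

/-- One GLA layer: from the input token matrix `Z` (rows are the tokens), produce
the output matrix `O` whose `i`-th row is `o_i = S_i q_i`. -/
noncomputable def glaOutput {n d : ℕ}
    (G : ℕ → Matrix (Fin (d + 1)) (Fin (d + 1)) ℝ)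
    (Wk Wq Wv : Matrix (Fin (d + 1)) (Fin (d + 1)) ℝ)
    (Z : Matrix (Fin (n + 1)) (Fin (d + 1)) ℝ) : Matrix (Fin (n + 1)) (Fin (d + 1)) ℝ :=
  Matrix.of fun i j =>
    (glaState G (fun t => Wvᵀ *ᵥ (if h : t < n + 1 then Z ⟨t, h⟩ else 0))
        (fun t => Wkᵀ *ᵥ (if h : t < n + 1 then Z ⟨t, h⟩ else 0)) ((i : ℕ) + 1)
      *ᵥ (Wqᵀ *ᵥ Z i)) j

/-- Multi-layer GLA with residual connections: `glaLayers … ℓ` is the paper's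
`Z_{ℓ+1}`, i.e. `glaLayers … 0 = Z_1` is the input and
`Z_{ℓ+1} = Z_ℓ + O_ℓ` where layer `ℓ` uses weights `Wk (ℓ-1), Wq (ℓ-1), Wv (ℓ-1)`. -/
noncomputable def glaLayers {n d : ℕ}
    (G : ℕ → Matrix (Fin (d + 1)) (Fin (d + 1)) ℝ)
    (Wk Wq Wv : ℕ → Matrix (Fin (d + 1)) (Fin (d + 1)) ℝ)
    (Z1 : Matrix (Fin (n + 1)) (Fin (d + 1)) ℝ) : ℕ → Matrix (Fin (n + 1)) (Fin (d + 1)) ℝ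
  | 0 => Z1
  | ℓ + 1 => glaLayers G Wk Wq Wv Z1 ℓ
      + glaOutput G (Wk ℓ) (Wq ℓ) (Wv ℓ) (glaLayers G Wk Wq Wv Z1 ℓ)

lemma symm_castSucc {d : ℕ} (i : Fin d) : finSumFinEquiv.symm (i.castSucc) = Sum.inl i := by
  simp [Fin.castSucc]

lemma symm_last {d : ℕ} : finSumFinEquiv.symm (Fin.last d) = Sum.inr 0 := by
  rw [show (Fin.last d) = Fin.natAdd d (0:Fin 1) by ext; simp]; simp

lemma blockT_mulVec {d : ℕ} (A : Matrix (Fin d) (Fin d) ℝ) (D : Matrix (Fin 1) (Fin 1) ℝ)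
    (z : Fin (d+1) → ℝ) :
    ((Matrix.reindex finSumFinEquiv finSumFinEquiv (Matrix.fromBlocks A 0 0 D))ᵀ *ᵥ z)
    = Fin.snoc (fun j => ∑ m : Fin d, A m j * z m.castSucc) (D 0 0 * z (Fin.last d)) := by
  funext p
  rw [mulVec, dotProduct, Fin.sum_univ_castSucc]
  refine Fin.lastCases ?_ ?_ p
  · simp [Matrix.reindex_apply, symm_castSucc, symm_last, Fin.snoc]
  · intro j
    simp [Matrix.reindex_apply, symm_castSucc, symm_last, Fin.snoc, Fin.castLT]

lemma glaState_apply {d : ℕ} (G : ℕ → Matrix (Fin (d+1)) (Fin (d+1)) ℝ)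
    (v k : ℕ → (Fin (d+1) → ℝ)) (m : ℕ) (p j : Fin (d+1)) :
    glaState G v k m p j
      = ∑ s ∈ Finset.range m, (∏ t ∈ Finset.Ioc s (m-1), G t p j) * (v s p * k s j) := by
  induction m with
  | zero => simp [glaState]
  | succ m ih =>
    rw [glaState]
    simp only [Matrix.add_apply, Matrix.hadamard_apply, vecMulVec_apply, ih]
    rw [Finset.sum_range_succ]
    congr 1
    · rw [Finset.mul_sum]
      refine Finset.sum_congr rfl fun s hs => ?_
      rw [Finset.mem_range] at hs
      rw [← mul_assoc]
      congr 1
      rw [mul_comm, show m + 1 - 1 = m from rfl]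
      rcases Nat.eq_zero_or_pos m with h | h
      · omega
      · rw [show m = (m-1)+1 by omega] at hs ⊢
        rw [Finset.prod_Ioc_succ_top (by omega)]
        simp
    · simp

lemma sum_ite_le {n i : ℕ} (h : i < n) (F : ℕ → ℝ) :
    ∑ k ∈ Finset.range n, (if k ≤ i then F k else 0) = ∑ s ∈ Finset.range (i+1), F s := by
  rw [← Finset.sum_filter]
  congr 1
  ext s
  simp only [Finset.mem_filter, Finset.mem_range]
  omega

/-- Core computation: output of one GLA layer on a structured token matrix. -/
lemma glaOutput_structured {n d : ℕ}
    (G : ℕ → Matrix (Fin (d + 1)) (Fin (d + 1)) ℝ)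
    (Pk Pq : Matrix (Fin d) (Fin d) ℝ)
    (Wk Wq Wv : Matrix (Fin (d + 1)) (Fin (d + 1)) ℝ)
    (hWk : Wk = Matrix.reindex finSumFinEquiv finSumFinEquiv
      (Matrix.fromBlocks Pk 0 0 (0 : Matrix (Fin 1) (Fin 1) ℝ)))
    (hWq : Wq = Matrix.reindex finSumFinEquiv finSumFinEquiv
      (Matrix.fromBlocks (-Pq) 0 0 (0 : Matrix (Fin 1) (Fin 1) ℝ)))
    (hWv : Wv = Matrix.reindex finSumFinEquiv finSumFinEquiv
      (Matrix.fromBlocks (0 : Matrix (Fin d) (Fin d) ℝ) 0 0 (1 : Matrix (Fin 1) (Fin 1) ℝ)))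
    (xr : Fin (n + 1) → Fin d → ℝ) (ε : Fin (n + 1) → ℝ)
    (Z : Matrix (Fin (n + 1)) (Fin (d + 1)) ℝ)
    (hZ : ∀ s, Z s = Fin.snoc (xr s) (ε s)) :
    (∀ (ii : Fin (n + 1)) (jj : Fin d), glaOutput G Wk Wq Wv Z ii jj.castSucc = 0) ∧
    (∀ ii : Fin (n + 1), glaOutput G Wk Wq Wv Z ii (Fin.last d)
      = ∑ jj : Fin d,
          (∑ s : Fin (n + 1), if (s : ℕ) ≤ (ii : ℕ) then
              (∏ t ∈ Finset.Ioc (s : ℕ) (ii : ℕ), G t (Fin.last d) jj.castSucc)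
                * (ε s * ∑ m : Fin d, Pk m jj * xr s m) else 0)
            * (-(∑ m : Fin d, Pq m jj * xr ii m))) := by
  -- values of the v, k, q embeddings
  have hv : ∀ (t : ℕ) (ht : t < n + 1),
      (Wvᵀ *ᵥ (if h : t < n + 1 then Z ⟨t, h⟩ else 0))
        = Fin.snoc (fun _ : Fin d => (0:ℝ)) (ε ⟨t, ht⟩) := by
    intro t ht
    rw [dif_pos ht, hWv, blockT_mulVec]
    funext p
    refine Fin.lastCases ?_ ?_ p <;> simp [hZ]
  have hk : ∀ (t : ℕ) (ht : t < n + 1),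
      (Wkᵀ *ᵥ (if h : t < n + 1 then Z ⟨t, h⟩ else 0))
        = Fin.snoc (fun j => ∑ m : Fin d, Pk m j * xr ⟨t, ht⟩ m) (0:ℝ) := by
    intro t ht
    rw [dif_pos ht, hWk, blockT_mulVec]
    funext p
    refine Fin.lastCases ?_ ?_ p <;> simp [hZ]
  have hq : ∀ ii : Fin (n+1), (Wqᵀ *ᵥ Z ii)
      = Fin.snoc (fun j => -∑ m : Fin d, Pq m j * xr ii m) (0:ℝ) := by
    intro ii
    rw [hWq, blockT_mulVec]
    funext p
    refine Fin.lastCases ?_ ?_ p <;>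
      simp [hZ, Finset.sum_neg_distrib, neg_mul]
  -- state rows other than the last vanish
  have hSrow : ∀ (m : ℕ) (p : Fin d) (j : Fin (d+1)), m ≤ n + 1 →
      glaState G (fun t => Wvᵀ *ᵥ (if h : t < n + 1 then Z ⟨t, h⟩ else 0))
        (fun t => Wkᵀ *ᵥ (if h : t < n + 1 then Z ⟨t, h⟩ else 0)) m p.castSucc j = 0 := by
    intro m p j hm
    rw [glaState_apply]
    refine Finset.sum_eq_zero fun s hs => ?_
    rw [Finset.mem_range] at hs
    rw [hv s (by omega)]
    simp
  -- state last-row, last-column vanishes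
  have hSll : ∀ m : ℕ, m ≤ n + 1 →
      glaState G (fun t => Wvᵀ *ᵥ (if h : t < n + 1 then Z ⟨t, h⟩ else 0))
        (fun t => Wkᵀ *ᵥ (if h : t < n + 1 then Z ⟨t, h⟩ else 0)) m (Fin.last d) (Fin.last d)
        = 0 := by
    intro m hm
    rw [glaState_apply]
    refine Finset.sum_eq_zero fun s hs => ?_
    rw [Finset.mem_range] at hs
    rw [hk s (by omega)]
    simp
  -- state last row at castSucc columns
  have hS : ∀ (ii : Fin (n+1)) (jj : Fin d),
      glaState G (fun t => Wvᵀ *ᵥ (if h : t < n + 1 then Z ⟨t, h⟩ else 0))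
        (fun t => Wkᵀ *ᵥ (if h : t < n + 1 then Z ⟨t, h⟩ else 0)) ((ii:ℕ)+1)
        (Fin.last d) jj.castSucc
      = ∑ s : Fin (n + 1), if (s : ℕ) ≤ (ii : ℕ) then
          (∏ t ∈ Finset.Ioc (s : ℕ) (ii : ℕ), G t (Fin.last d) jj.castSucc)
            * (ε s * ∑ m : Fin d, Pk m jj * xr s m) else 0 := by
    intro ii jj
    rw [glaState_apply, show (ii:ℕ)+1-1 = (ii:ℕ) from rfl]
    rw [← sum_ite_le (show (ii:ℕ) < n + 1 from ii.isLt)]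
    rw [← Fin.sum_univ_eq_sum_range (fun s => if s ≤ (ii:ℕ) then
      (∏ t ∈ Finset.Ioc s (ii:ℕ), G t (Fin.last d) jj.castSucc)
        * ((fun t => Wvᵀ *ᵥ (if h : t < n + 1 then Z ⟨t, h⟩ else 0)) s (Fin.last d)
          * (fun t => Wkᵀ *ᵥ (if h : t < n + 1 then Z ⟨t, h⟩ else 0)) s jj.castSucc) else 0)]
    refine Finset.sum_congr rfl fun s _ => ?_
    by_cases hsi : (s:ℕ) ≤ (ii:ℕ)
    · rw [if_pos hsi, if_pos hsi]
      simp only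
      rw [hv s s.isLt, hk s s.isLt]
      simp
    · rw [if_neg hsi, if_neg hsi]
  constructor
  · intro ii jj
    show (glaState G _ _ ((ii:ℕ)+1) *ᵥ (Wqᵀ *ᵥ Z ii)) jj.castSucc = 0
    rw [mulVec, dotProduct]
    refine Finset.sum_eq_zero fun m _ => ?_
    rw [hSrow ((ii:ℕ)+1) jj m (by omega)]
    ring
  · intro ii
    show (glaState G _ _ ((ii:ℕ)+1) *ᵥ (Wqᵀ *ᵥ Z ii)) (Fin.last d)
      = _
    rw [mulVec, dotProduct, Fin.sum_univ_castSucc]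
    rw [hSll ((ii:ℕ)+1) (by omega), hq ii]
    simp only [Fin.snoc_last, Fin.snoc_castSucc, mul_zero, zero_mul, add_zero]
    refine Finset.sum_congr rfl fun jj _ => ?_
    rw [hS ii jj]

lemma dot_mulVec_expand {d : ℕ} (a : Fin d → ℝ) (P : Matrix (Fin d) (Fin d) ℝ)
    (w : Fin d → ℝ) :
    a ⬝ᵥ (P *ᵥ w) = ∑ jj : Fin d, (∑ m : Fin d, P m jj * a m) * w jj := by
  simp only [dotProduct, mulVec, Finset.mul_sum, Finset.sum_mul]
  rw [Finset.sum_comm]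
  exact Finset.sum_congr rfl fun jj _ => Finset.sum_congr rfl fun m _ => by ring
/-- An `L`-layer GLA with residual connections implements the
recursively weighted preconditioned gradient descent iterations `β_{i,ℓ}`, `β̂_ℓ`. -/
theorem stmt3 (n d L : ℕ) (hn : 0 < n) (hd : 0 < d) (hL : 0 < L)
    (x : Fin n → Fin d → ℝ) (yv : Fin n → ℝ) (xq : Fin d → ℝ)
    -- layer parameters: `Pk ℓ`, `Pq ℓ` are the paper's `P_{k,ℓ+1}`, `P_{q,ℓ+1}`
    (Pk Pq : ℕ → Matrix (Fin d) (Fin d) ℝ)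
    (Wk Wq Wv : ℕ → Matrix (Fin (d + 1)) (Fin (d + 1)) ℝ)
    (hWk : ∀ ℓ, Wk ℓ = Matrix.reindex finSumFinEquiv finSumFinEquiv
      (Matrix.fromBlocks (Pk ℓ) 0 0 (0 : Matrix (Fin 1) (Fin 1) ℝ)))
    (hWq : ∀ ℓ, Wq ℓ = Matrix.reindex finSumFinEquiv finSumFinEquiv
      (Matrix.fromBlocks (-(Pq ℓ)) 0 0 (0 : Matrix (Fin 1) (Fin 1) ℝ)))
    (hWv : ∀ ℓ, Wv ℓ = Matrix.reindex finSumFinEquiv finSumFinEquiv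
      (Matrix.fromBlocks (0 : Matrix (Fin d) (Fin d) ℝ) 0 0 (1 : Matrix (Fin 1) (Fin 1) ℝ)))
    -- gating matrices (the same at every layer): `G i` is the paper's `G_{i+1}`;
    -- the first `d` entries of the last row of each are nonzero
    (G : ℕ → Matrix (Fin (d + 1)) (Fin (d + 1)) ℝ)
    (hGne : ∀ t : ℕ, t ≤ n → ∀ j : Fin d, G t (Fin.last d) j.castSucc ≠ 0)
    -- `gprod i` is the paper's `g_{(i+1):n+1} = g_{i+2} ⊙ ⋯ ⊙ g_{n+1}`
    (gprod : Fin n → Fin d → ℝ)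
    (hgprod : ∀ (i : Fin n) (j : Fin d),
      gprod i j = ∏ t ∈ Finset.Icc ((i : ℕ) + 1) n, G t (Fin.last d) j.castSucc)
    -- `Ω` has rows `g_{i:n+1}ᵀ`, and `Xl ℓ` is the paper's `X_{ℓ+1} = (X P_{k,ℓ+1}) ⊙ Ω`
    (Ω : Matrix (Fin n) (Fin d) ℝ) (hΩ : ∀ i j, Ω i j = gprod i j)
    (Xl : ℕ → Matrix (Fin n) (Fin d) ℝ)
    (hXl : ∀ ℓ, Xl ℓ = (Matrix.of x * Pk ℓ).hadamard Ω)
    -- the input prompt `Z_1`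
    (Z1 : Matrix (Fin (n + 1)) (Fin (d + 1)) ℝ)
    (hZ1 : ∀ i : Fin n, Z1 i.castSucc = Fin.snoc (x i) (yv i))
    (hZ1q : Z1 (Fin.last n) = Fin.snoc xq 0)
    -- the WPGD iterates: `β ℓ i` is the paper's `β_{i+1,ℓ}` and `βhat ℓ` is `β̂_ℓ`;
    -- `yhat ℓ` is `ŷ_ℓ` and `α ℓ` is `α_{ℓ+1} = xᵀ P_{q,ℓ+1} P_{k,ℓ+1}ᵀ x`
    (β : ℕ → Fin n → Fin d → ℝ) (βhat : ℕ → Fin d → ℝ)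
    (yhat : ℕ → Fin n → ℝ) (α : ℕ → ℝ)
    (hyhat : ∀ (ℓ : ℕ) (k : Fin n), yhat ℓ k = x k ⬝ᵥ β ℓ k)
    (hα : ∀ ℓ, α ℓ = xq ⬝ᵥ ((Pq ℓ * (Pk ℓ)ᵀ) *ᵥ xq))
    (hβ0 : β 0 = 0) (hβhat0 : βhat 0 = 0)
    (hβrec : ∀ ℓ < L, ∀ i : Fin n, β (ℓ + 1) i
      = β ℓ i - Pq ℓ *ᵥ (fun j =>
          ((Xl ℓ)ᵀ *ᵥ (fun k : Fin n =>
            if (k : ℕ) ≤ (i : ℕ) then yhat ℓ k - yv k else 0)) j / gprod i j))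
    (hβhatrec : ∀ ℓ < L, βhat (ℓ + 1)
      = (1 - α ℓ) • βhat ℓ - Pq ℓ *ᵥ ((Xl ℓ)ᵀ *ᵥ (fun k => yhat ℓ k - yv k))) :
    ∀ ℓ ≤ L,
      (∀ (i : Fin n) (j : Fin d),
        glaLayers G Wk Wq Wv Z1 ℓ i.castSucc j.castSucc = x i j) ∧
      (∀ j : Fin d, glaLayers G Wk Wq Wv Z1 ℓ (Fin.last n) j.castSucc = xq j) ∧
      (∀ i : Fin n,
        glaLayers G Wk Wq Wv Z1 ℓ i.castSucc (Fin.last d) = yv i - x i ⬝ᵥ β ℓ i) ∧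
      glaLayers G Wk Wq Wv Z1 ℓ (Fin.last n) (Fin.last d) = -(xq ⬝ᵥ βhat ℓ) := by
  
  intro ℓ hℓ
  induction ℓ with
  | zero =>
    refine ⟨fun i j => ?_, fun j => ?_, fun i => ?_, ?_⟩
    · show Z1 i.castSucc j.castSucc = x i j
      rw [hZ1]; simp
    · show Z1 (Fin.last n) j.castSucc = xq j
      rw [hZ1q]; simp
    · show Z1 i.castSucc (Fin.last d) = _
      rw [hZ1, hβ0]; simp
    · show Z1 (Fin.last n) (Fin.last d) = _
      rw [hZ1q, hβhat0]; simp
  | succ ℓ ih =>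
    have hℓL : ℓ < L := hℓ
    obtain ⟨ih1, ih2, ih3, ih4⟩ := ih (Nat.le_of_lt hℓL)
    set Zc := glaLayers G Wk Wq Wv Z1 ℓ with hZcdef
    set ε : Fin (n+1) → ℝ := fun s => Zc s (Fin.last d) with hεdef
    have hZs : ∀ s, Zc s = Fin.snoc ((Fin.snoc x xq : Fin (n+1) → Fin d → ℝ) s) (ε s) := by
      intro s
      funext p
      refine Fin.lastCases ?_ ?_ p
      · simp [hεdef]
      · intro j
        refine Fin.lastCases ?_ ?_ s
        · simp [ih2]
        · intro i; simp [ih1]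
    obtain ⟨hO1, hO2⟩ := glaOutput_structured G (Pk ℓ) (Pq ℓ) (Wk ℓ) (Wq ℓ) (Wv ℓ)
      (hWk ℓ) (hWq ℓ) (hWv ℓ) (Fin.snoc x xq : Fin (n+1) → Fin d → ℝ) ε Zc hZs
    have hnext : glaLayers G Wk Wq Wv Z1 (ℓ+1)
        = Zc + glaOutput G (Wk ℓ) (Wq ℓ) (Wv ℓ) Zc := rfl
    have hεc : ∀ k : Fin n, ε k.castSucc = yv k - x k ⬝ᵥ β ℓ k := fun k => ih3 k
    have hεl : ε (Fin.last n) = -(xq ⬝ᵥ βhat ℓ) := ih4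
    have hgne : ∀ (i : Fin n) (jj : Fin d), gprod i jj ≠ 0 := by
      intro i jj
      rw [hgprod]
      refine Finset.prod_ne_zero_iff.mpr fun t ht => hGne t ?_ jj
      rw [Finset.mem_Icc] at ht
      omega
    have hgsplit : ∀ (k i : Fin n), (k:ℕ) ≤ (i:ℕ) → ∀ jj : Fin d,
        gprod k jj = (∏ t ∈ Finset.Ioc (k:ℕ) (i:ℕ), G t (Fin.last d) jj.castSucc)
          * gprod i jj := by
      intro k i hki jj
      rw [hgprod, hgprod, Finset.Icc_add_one_left_eq_Ioc, Finset.Icc_add_one_left_eq_Ioc]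
      exact (Finset.prod_Ioc_consecutive _ hki (by omega)).symm
    refine ⟨fun i j => ?_, fun j => ?_, fun i => ?_, ?_⟩
    · rw [hnext, Matrix.add_apply, hO1, ih1]; ring
    · rw [hnext, Matrix.add_apply, hO1, ih2]; ring
    · rw [hnext, Matrix.add_apply, hO2, ih3 i, hβrec ℓ hℓL i, dotProduct_sub,
        dot_mulVec_expand]
      simp only [Fin.snoc_castSucc, Fin.coe_castSucc]
      have hw : ∀ jj : Fin d,
          (∑ s : Fin (n + 1), if (s:ℕ) ≤ (i:ℕ) then
              (∏ t ∈ Finset.Ioc (s:ℕ) (i:ℕ), G t (Fin.last d) jj.castSucc) *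
                (ε s * ∑ m : Fin d, Pk ℓ m jj * (Fin.snoc x xq : Fin (n+1) → Fin d → ℝ) s m)
            else 0)
          = -(((Xl ℓ)ᵀ *ᵥ fun k => if (k:ℕ) ≤ (i:ℕ) then yhat ℓ k - yv k else 0) jj
              / gprod i jj) := by
        intro jj
        rw [← neg_div, eq_div_iff (hgne i jj)]
        rw [mulVec, dotProduct, ← Finset.sum_neg_distrib]
        rw [Fin.sum_univ_castSucc]
        simp only [Fin.coe_castSucc, Fin.val_last, Fin.snoc_castSucc, Fin.snoc_last]
        rw [if_neg (Nat.not_le.mpr i.isLt), add_zero, Finset.sum_mul]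
        refine Finset.sum_congr rfl fun k _ => ?_
        by_cases hki : (k:ℕ) ≤ (i:ℕ)
        · rw [if_pos hki, if_pos hki, Matrix.transpose_apply, hXl,
            Matrix.hadamard_apply, hΩ, hgsplit k i hki jj, hεc k, hyhat]
          have hκ : (∑ m : Fin d, Pk ℓ m jj * x k m)
              = (Matrix.of x * Pk ℓ) k jj := by
            rw [Matrix.mul_apply]
            exact Finset.sum_congr rfl fun m _ => by simp [mul_comm]
          rw [hκ]
          ring
        · rw [if_neg hki, if_neg hki]
          simp
      have hterm : ∀ jj : Fin d,
          (∑ s : Fin (n + 1), if (s:ℕ) ≤ (i:ℕ) then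
              (∏ t ∈ Finset.Ioc (s:ℕ) (i:ℕ), G t (Fin.last d) jj.castSucc) *
                (ε s * ∑ m : Fin d, Pk ℓ m jj * (Fin.snoc x xq : Fin (n+1) → Fin d → ℝ) s m)
            else 0) * (-∑ m : Fin d, Pq ℓ m jj * x i m)
          = (∑ m : Fin d, Pq ℓ m jj * x i m) *
              (((Xl ℓ)ᵀ *ᵥ fun k => if (k:ℕ) ≤ (i:ℕ) then yhat ℓ k - yv k else 0) jj
                / gprod i jj) := by
        intro jj
        rw [hw jj]
        ring
      rw [Finset.sum_congr rfl fun jj _ => hterm jj]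
      ring
    · rw [hnext, Matrix.add_apply, hO2, ih4, hβhatrec ℓ hℓL, dotProduct_sub,
        dot_mulVec_expand]
      simp only [dotProduct_smul, smul_eq_mul, Fin.snoc_last, Fin.val_last]
      have hα' : α ℓ = ∑ jj : Fin d,
          (∑ m : Fin d, Pq ℓ m jj * xq m) * (∑ m : Fin d, Pk ℓ m jj * xq m) := by
        rw [hα, show (Pq ℓ * (Pk ℓ)ᵀ) *ᵥ xq = Pq ℓ *ᵥ ((Pk ℓ)ᵀ *ᵥ xq) from
          (Matrix.mulVec_mulVec _ _ _).symm, dot_mulVec_expand]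
        refine Finset.sum_congr rfl fun jj _ => ?_
        simp only [Matrix.mulVec, dotProduct, Matrix.transpose_apply]
      have hS4 : ∀ jj : Fin d,
          (∑ s : Fin (n + 1), if (s:ℕ) ≤ n then
              (∏ t ∈ Finset.Ioc (s:ℕ) n, G t (Fin.last d) jj.castSucc) *
                (ε s * ∑ m : Fin d, Pk ℓ m jj * (Fin.snoc x xq : Fin (n+1) → Fin d → ℝ) s m)
            else 0)
          = -(((Xl ℓ)ᵀ *ᵥ fun k => yhat ℓ k - yv k) jj)
            + -((xq ⬝ᵥ βhat ℓ) * (∑ m : Fin d, Pk ℓ m jj * xq m)) := by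
        intro jj
        rw [Fin.sum_univ_castSucc]
        simp only [Fin.coe_castSucc, Fin.val_last, Fin.snoc_castSucc, Fin.snoc_last]
        rw [if_pos (le_refl n), Finset.Ioc_self, Finset.prod_empty, one_mul, hεl]
        congr 1
        · rw [mulVec, dotProduct, ← Finset.sum_neg_distrib]
          refine Finset.sum_congr rfl fun k _ => ?_
          rw [if_pos (Nat.le_of_lt k.isLt), Matrix.transpose_apply, hXl,
            Matrix.hadamard_apply, hΩ, hεc k, hyhat, hgprod, Finset.Icc_add_one_left_eq_Ioc]
          have hκ : (∑ m : Fin d, Pk ℓ m jj * x k m)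
              = (Matrix.of x * Pk ℓ) k jj := by
            rw [Matrix.mul_apply]
            exact Finset.sum_congr rfl fun m _ => by simp [mul_comm]
          rw [hκ]
          ring
        · ring
      have hterm4 : ∀ jj : Fin d,
          (∑ s : Fin (n + 1), if (s:ℕ) ≤ n then
              (∏ t ∈ Finset.Ioc (s:ℕ) n, G t (Fin.last d) jj.castSucc) *
                (ε s * ∑ m : Fin d, Pk ℓ m jj * (Fin.snoc x xq : Fin (n+1) → Fin d → ℝ) s m)
            else 0) * (-∑ m : Fin d, Pq ℓ m jj * xq m)
          = (∑ m : Fin d, Pq ℓ m jj * xq m) * ((Xl ℓ)ᵀ *ᵥ fun k => yhat ℓ k - yv k) jj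
            + ((∑ m : Fin d, Pq ℓ m jj * xq m) * (∑ m : Fin d, Pk ℓ m jj * xq m))
              * (xq ⬝ᵥ βhat ℓ) := by
        intro jj
        rw [hS4 jj]
        ring
      rw [Finset.sum_congr rfl fun jj _ => hterm4 jj, Finset.sum_add_distrib,
        ← Finset.sum_mul, ← hα']
      ring
end

section
/- There exists γ* ≥ 1 such that h₁(h₂(γ*)) + 1 = γ*. -/
open Finset

/-- `h₁(γ̄) = (Σᵢ λᵢ aᵢ²/(1+λᵢγ̄)²) · (Σᵢ aᵢ²/(1+λᵢγ̄)²)⁻¹`. -/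
noncomputable def h1 {n : ℕ} (lam a : Fin n → ℝ) (γ : ℝ) : ℝ :=
  (∑ i, lam i * a i ^ 2 / (1 + lam i * γ) ^ 2) * (∑ i, a i ^ 2 / (1 + lam i * γ) ^ 2)⁻¹

/-- `h₂(γ) = (1 + M·(Σᵢ sᵢ²/(M+sᵢγ)²)·(Σᵢ sᵢ³/(M+sᵢγ)²)⁻¹)⁻¹`. -/
noncomputable def h2 {d : ℕ} (s : Fin d → ℝ) (M γ : ℝ) : ℝ :=
  (1 + M * (∑ i, s i ^ 2 / (M + s i * γ) ^ 2) * (∑ i, s i ^ 3 / (M + s i * γ) ^ 2)⁻¹)⁻¹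

/-- Existence of a fixed point. There exists `γ* ≥ 1` with
`h₁(h₂(γ*)) + 1 = γ*`. -/
theorem stmt4 (d n : ℕ) (hd : 0 < d) (hn : 0 < n)
    (s : Fin d → ℝ) (hs : ∀ i, 0 < s i)
    (lam : Fin n → ℝ) (hlam : ∀ i, 0 ≤ lam i)
    (a : Fin n → ℝ) (ha : ∃ i, a i ≠ 0)
    (σ : ℝ) (hσ : 0 ≤ σ)
    (M : ℝ) (hM : M = σ ^ 2 + ∑ i, s i) :
    ∃ γstar : ℝ, 1 ≤ γstar ∧ h1 lam a (h2 s M γstar) + 1 = γstar := by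
  obtain ⟨i0, ha0⟩ := ha
  have hMpos : 0 < M := by
    have hsum : 0 < ∑ i, s i := Finset.sum_pos (fun i _ => hs i) ⟨⟨0, hd⟩, mem_univ _⟩
    rw [hM]; positivity
  -- bound for h1
  set L : ℝ := ∑ i, lam i with hL
  have hL0 : 0 ≤ L := Finset.sum_nonneg fun i _ => hlam i
  have hlamL : ∀ i, lam i ≤ L := fun i =>
    Finset.single_le_sum (fun j _ => hlam j) (mem_univ i)
  -- denominators of h1 positive for nonneg argument
  have hden : ∀ (x : ℝ), 0 ≤ x → ∀ i, (0:ℝ) < (1 + lam i * x) ^ 2 := by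
    intro x hx i
    have : (0:ℝ) < 1 + lam i * x := by nlinarith [hlam i]
    positivity
  have hS0 : ∀ (x : ℝ), 0 ≤ x → 0 < ∑ i, a i ^ 2 / (1 + lam i * x) ^ 2 := by
    intro x hx
    apply Finset.sum_pos' (fun i _ => by positivity)
    exact ⟨i0, mem_univ _, div_pos (by positivity) (hden x hx i0)⟩
  have h1nonneg : ∀ (x : ℝ), 0 ≤ x → 0 ≤ h1 lam a x := by
    intro x hx
    apply mul_nonneg
    · exact Finset.sum_nonneg fun i _ =>
        div_nonneg (mul_nonneg (hlam i) (sq_nonneg _)) (hden x hx i).le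
    · exact (inv_nonneg).2 (hS0 x hx).le
  have h1le : ∀ (x : ℝ), 0 ≤ x → h1 lam a x ≤ L := by
    intro x hx
    rw [h1, ← div_eq_mul_inv, div_le_iff₀ (hS0 x hx), Finset.mul_sum]
    apply Finset.sum_le_sum
    intro i _
    rw [← mul_div_assoc]
    gcongr <;> first
      | exact hlamL i
      | exact (hden x hx i).le
      | exact sq_nonneg _
      | positivity
  -- h2 nonneg for γ ≥ 1
  have hden2 : ∀ (γ : ℝ), 1 ≤ γ → ∀ i, (0:ℝ) < M + s i * γ := by
    intro γ hγ i
    nlinarith [hs i]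
  have hS3 : ∀ (γ : ℝ), 1 ≤ γ → 0 < ∑ i, s i ^ 3 / (M + s i * γ) ^ 2 := by
    intro γ hγ
    apply Finset.sum_pos (fun i _ => ?_) ⟨⟨0, hd⟩, mem_univ _⟩
    have h1' := hs i
    have h2' := hden2 γ hγ i
    positivity
  have h2nonneg : ∀ (γ : ℝ), 1 ≤ γ → 0 ≤ h2 s M γ := by
    intro γ hγ
    rw [h2]
    apply inv_nonneg.2
    have h2' : 0 ≤ ∑ i, s i ^ 2 / (M + s i * γ) ^ 2 :=
      Finset.sum_nonneg fun i _ => div_nonneg (by positivity) (sq_nonneg _)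
    have := hS3 γ hγ
    positivity
  -- continuity
  set B : ℝ := L + 1 with hB
  have hB1 : (1:ℝ) ≤ B := by linarith
  have hcont2 : ContinuousOn (fun γ => h2 s M γ) (Set.Icc 1 B) := by
    have hterm : ∀ (k : ℕ), ContinuousOn
        (fun γ => ∑ i, s i ^ k / (M + s i * γ) ^ 2) (Set.Icc 1 B) := by
      intro k
      apply continuousOn_finset_sum
      intro i _
      apply ContinuousOn.div continuousOn_const
      · fun_prop
      · intro γ hγ
        have := hden2 γ hγ.1 i
        positivity
    unfold h2
    apply ContinuousOn.inv₀
    · apply ContinuousOn.add continuousOn_const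
      apply ContinuousOn.mul (ContinuousOn.mul continuousOn_const (hterm 2))
      exact ContinuousOn.inv₀ (hterm 3) fun γ hγ => (hS3 γ hγ.1).ne'
    · intro γ hγ
      have h2' : 0 ≤ ∑ i, s i ^ 2 / (M + s i * γ) ^ 2 :=
        Finset.sum_nonneg fun i _ => div_nonneg (by positivity) (sq_nonneg _)
      have := hS3 γ hγ.1
      positivity
  have hcont1 : ContinuousOn (fun x => h1 lam a x) (Set.Ici 0) := by
    have hterm : ∀ (c : Fin n → ℝ), ContinuousOn
        (fun x => ∑ i, c i / (1 + lam i * x) ^ 2) (Set.Ici (0:ℝ)) := by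
      intro c
      apply continuousOn_finset_sum
      intro i _
      apply ContinuousOn.div continuousOn_const
      · fun_prop
      · intro x hx
        exact ne_of_gt (hden x hx i)
    unfold h1
    exact ContinuousOn.mul (hterm fun i => lam i * a i ^ 2)
      (ContinuousOn.inv₀ (hterm fun i => a i ^ 2) fun x hx => (hS0 x hx).ne')
  have hmaps : Set.MapsTo (fun γ => h2 s M γ) (Set.Icc 1 B) (Set.Ici 0) :=
    fun γ hγ => h2nonneg γ hγ.1
  have hcontF : ContinuousOn (fun γ => h1 lam a (h2 s M γ) + 1 - γ) (Set.Icc 1 B) := by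
    apply ContinuousOn.sub (ContinuousOn.add (hcont1.comp hcont2 hmaps) continuousOn_const)
      continuousOn_id
  -- IVT
  set g : ℝ → ℝ := fun γ => h1 lam a (h2 s M γ) + 1 - γ with hg
  have hg1 : 0 ≤ g 1 := by
    have := h1nonneg _ (h2nonneg 1 le_rfl)
    simp [hg]; linarith
  have hgB : g B ≤ 0 := by
    have := h1le _ (h2nonneg B hB1)
    simp [hg, hB]; linarith
  have := intermediate_value_Icc' hB1 hcontF
  have hmem : (0:ℝ) ∈ Set.Icc (g B) (g 1) := ⟨hgB, hg1⟩
  obtain ⟨γstar, hγs, hγeq⟩ := this hmem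
  simp only [hg] at hγeq
  exact ⟨γstar, hγs.1, by linarith [hγeq]⟩
end

section
/- Assume additionally that a_i = 0 whenever λ_i = 0. Then the composite function γ ↦ h₁(h₂(γ)) is differentiable on [1, ∞) and for every γ ≥ 1, |d/dγ [h₁(h₂(γ))]| ≤ Δ_Σ² · Δ_R² / (M + s_min)². In particular, if Δ_Σ · Δ_R < M + s_min, then |d/dγ [h₁(h₂(γ))]| < 1 for every γ ≥ 1. -/
open Finset

/-!
Both `h1` and `h2` are weighted means `m(γ) = Σ wᵢ(γ) xᵢ / Σ wᵢ(γ)` with weights of the form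
`wᵢ(γ) = cᵢ / (bᵢ + βᵢ γ)²`; for `h2` the weights are `(M + sᵢ) sᵢ² / (M + sᵢ γ)²` and the values
`xᵢ = sᵢ / (M + sᵢ)`. Since `wᵢ' = -2 uᵢ wᵢ` with `uᵢ = βᵢ / (bᵢ + βᵢ γ)`, the quotient rule gives
`m' = -(Σᵢ Σⱼ wᵢ wⱼ (xᵢ - xⱼ)(uᵢ - uⱼ)) / (Σ w)²`, so `|m'|` is at most the largest
`|(xᵢ - xⱼ)(uᵢ - uⱼ)|` over pairs of nonzero weight. For `h1` both factors are at most `Δ_R`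
(the weights `aᵢ²` vanish where `λᵢ = 0`). For `h2` both `xᵢ` and `uᵢ` are values of
`s ↦ s / (M + s t)` (at `t = 1` and `t = γ`), whose increments are at most `Δ_Σ / (M + s_min)`.
The chain rule multiplies the two bounds.
-/

section WeightedMean

variable {ι : Type*} [Fintype ι]

theorem sum_sum_mul_mul_sub_mul_sub (w x u : ι → ℝ) :
    ∑ i, ∑ j, w i * w j * ((x i - x j) * (u i - u j))
      = 2 * ((∑ i, w i * x i * u i) * ∑ i, w i - (∑ i, w i * x i) * ∑ i, w i * u i) := by
  have expand : ∀ i j, w i * w j * ((x i - x j) * (u i - u j))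
      = w i * x i * u i * w j + w j * x j * u j * w i
        - (w i * x i * (w j * u j) + w j * x j * (w i * u i)) := fun i j => by ring
  simp only [expand, sum_sub_distrib, sum_add_distrib, ← sum_mul, ← mul_sum]
  ring

theorem abs_sum_mul_sum_sub_sum_mul_sum_le {w x u : ι → ℝ} {K : ℝ} (hw : ∀ i, 0 ≤ w i)
    (hK : ∀ i j, w i ≠ 0 → w j ≠ 0 → |(x i - x j) * (u i - u j)| ≤ K) :
    |(∑ i, w i * x i * u i) * ∑ i, w i - (∑ i, w i * x i) * ∑ i, w i * u i|
      ≤ K / 2 * (∑ i, w i) ^ 2 := by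
  have hterm : ∀ i j, |w i * w j * ((x i - x j) * (u i - u j))| ≤ w i * w j * K := by
    intro i j
    rcases (hw i).eq_or_lt with hi | hi
    · simp [← hi]
    rcases (hw j).eq_or_lt with hj | hj
    · simp [← hj]
    rw [abs_mul, abs_of_pos (mul_pos hi hj)]
    exact mul_le_mul_of_nonneg_left (hK i j hi.ne' hj.ne') (mul_pos hi hj).le
  have hsum : |∑ i, ∑ j, w i * w j * ((x i - x j) * (u i - u j))| ≤ K * (∑ i, w i) ^ 2 :=
    calc _ ≤ ∑ i, ∑ j, |w i * w j * ((x i - x j) * (u i - u j))| :=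
          (abs_sum_le_sum_abs _ _).trans (sum_le_sum fun i _ => abs_sum_le_sum_abs _ _)
      _ ≤ ∑ i, ∑ j, w i * w j * K := sum_le_sum fun i _ => sum_le_sum fun j _ => hterm i j
      _ = K * (∑ i, w i) ^ 2 := by simp only [← sum_mul, ← mul_sum]; ring
  rw [sum_sum_mul_mul_sub_mul_sub, abs_mul, abs_two] at hsum
  linarith

theorem hasDerivAt_centerMass {w : ι → ℝ → ℝ} {w' x : ι → ℝ} {γ : ℝ}
    (hw : ∀ i, HasDerivAt (w i) (w' i) γ) (hsum : ∑ i, w i γ ≠ 0) :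
    HasDerivAt (fun t => univ.centerMass (fun i => w i t) x)
      (((∑ i, w' i * x i) * ∑ i, w i γ - (∑ i, w i γ * x i) * ∑ i, w' i) / (∑ i, w i γ) ^ 2)
      γ := by
  have hnum : HasDerivAt (fun t => ∑ i, w i t * x i) (∑ i, w' i * x i) γ :=
    HasDerivAt.fun_sum fun i _ => (hw i).mul_const (x i)
  have hden : HasDerivAt (fun t => ∑ i, w i t) (∑ i, w' i) γ :=
    HasDerivAt.fun_sum fun i _ => hw i
  have hmean : (fun t => univ.centerMass (fun i => w i t) x)
      = fun t => (∑ i, w i t * x i) / ∑ i, w i t := by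
    ext t
    rw [centerMass, smul_eq_mul, div_eq_inv_mul]
    simp only [smul_eq_mul]
  rw [hmean]
  exact hnum.fun_div hden hsum

theorem hasDerivAt_div_add_mul_sq {c b β γ : ℝ} (h : b + β * γ ≠ 0) :
    HasDerivAt (fun t => c / (b + β * t) ^ 2)
      (-2 * (c / (b + β * γ) ^ 2 * (β / (b + β * γ)))) γ := by
  have hlin : HasDerivAt (fun t => b + β * t) β γ := by
    simpa using ((hasDerivAt_id γ).const_mul β).const_add b
  refine ((hasDerivAt_const γ c).fun_div (hlin.fun_pow 2) (pow_ne_zero 2 h)).congr_deriv ?_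
  field_simp
  ring

theorem exists_hasDerivAt_centerMass_abs_le {w : ι → ℝ → ℝ} {u x : ι → ℝ} {γ K : ℝ}
    (hw : ∀ i, HasDerivAt (w i) (-2 * (w i γ * u i)) γ) (hw0 : ∀ i, 0 ≤ w i γ)
    (hsum : 0 < ∑ i, w i γ)
    (hK : ∀ i j, w i γ ≠ 0 → w j γ ≠ 0 → |(x i - x j) * (u i - u j)| ≤ K) :
    ∃ D, HasDerivAt (fun t => univ.centerMass (fun i => w i t) x) D γ ∧ |D| ≤ K := by
  refine ⟨_, hasDerivAt_centerMass hw hsum.ne', ?_⟩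
  have hcov := abs_sum_mul_sum_sub_sum_mul_sum_le (x := x) hw0 hK
  have hnum : ∑ i, -2 * (w i γ * u i) * x i = -2 * ∑ i, w i γ * x i * u i := by
    rw [mul_sum]; exact sum_congr rfl fun i _ => by ring
  have hden : ∑ i, -2 * (w i γ * u i) = -2 * ∑ i, w i γ * u i := by rw [mul_sum]
  rw [hnum, hden, abs_div, abs_of_pos (pow_pos hsum 2), div_le_iff₀ (pow_pos hsum 2),
    show ∀ A S B U : ℝ, -2 * A * S - B * (-2 * U) = -(2 * (A * S - B * U)) by intros; ring,
    abs_neg, abs_mul, abs_two]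
  linarith

theorem exists_hasDerivAt_centerMass_inv_sq_abs_le {c b β x : ι → ℝ} {γ K : ℝ}
    (hc : ∀ i, 0 ≤ c i) (hc0 : ∃ i, c i ≠ 0) (hpos : ∀ i, 0 < b i + β i * γ)
    (hK : ∀ i j, c i ≠ 0 → c j ≠ 0 →
      |(x i - x j) * (β i / (b i + β i * γ) - β j / (b j + β j * γ))| ≤ K) :
    ∃ D, HasDerivAt (fun t => univ.centerMass (fun i => c i / (b i + β i * t) ^ 2) x) D γ ∧
      |D| ≤ K := by
  have hw0 : ∀ i, 0 ≤ c i / (b i + β i * γ) ^ 2 := fun i => div_nonneg (hc i) (sq_nonneg _)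
  refine exists_hasDerivAt_centerMass_abs_le
    (fun i => hasDerivAt_div_add_mul_sq (hpos i).ne') hw0 ?_
    fun i j hi hj => hK i j (fun h => hi (by simp [h])) (fun h => hj (by simp [h]))
  obtain ⟨i, hi⟩ := hc0
  exact sum_pos' (fun i _ => hw0 i)
    ⟨i, mem_univ i, div_pos ((hc i).lt_of_ne' hi) (pow_pos (hpos i) 2)⟩

end WeightedMean

theorem abs_div_add_mul_sub_div_add_mul_le {M m p q t : ℝ} (hM : 0 < M) (hm : 0 < M + m)
    (hmp : m ≤ p * t) (hq : 0 ≤ q * t) :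
    |p / (M + p * t) - q / (M + q * t)| ≤ |p - q| / (M + m) := by
  have hpt : 0 < M + p * t := by linarith
  have hqt : 0 < M + q * t := by linarith
  rw [div_sub_div _ _ hpt.ne' hqt.ne',
    show p * (M + q * t) - (M + p * t) * q = M * (p - q) by ring, abs_div, abs_mul,
    abs_of_pos hM, abs_of_pos (mul_pos hpt hqt),
    div_le_div_iff₀ (mul_pos hpt hqt) hm]
  have hden : M * (M + m) ≤ (M + p * t) * (M + q * t) := by nlinarith
  nlinarith [mul_le_mul_of_nonneg_left hden (abs_nonneg (p - q))]

theorem h1_eq_centerMass {n : ℕ} (lam a : Fin n → ℝ) :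
    h1 lam a = fun t => univ.centerMass (fun i => a i ^ 2 / (1 + lam i * t) ^ 2) lam := by
  ext t
  rw [h1, centerMass, smul_eq_mul, mul_comm]
  congr 1
  exact sum_congr rfl fun i _ => by rw [smul_eq_mul, mul_comm, mul_div_right_comm]

theorem exists_hasDerivAt_h1_abs_le {n : ℕ} {lam a : Fin n → ℝ} {lmin lmax γ : ℝ}
    (hlam : ∀ i, 0 ≤ lam i) (ha : ∃ i, a i ≠ 0) (ha0 : ∀ i, lam i = 0 → a i = 0)
    (hl : ∀ i, lam i ≠ 0 → lam i ∈ Set.Icc lmin lmax) (hγ : 0 ≤ γ) :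
    ∃ D, HasDerivAt (h1 lam a) D γ ∧ |D| ≤ (lmax - lmin) ^ 2 := by
  rw [h1_eq_centerMass]
  refine exists_hasDerivAt_centerMass_inv_sq_abs_le (fun i => sq_nonneg _) ?_
    (fun i => by have := mul_nonneg (hlam i) hγ; linarith) fun i j hi hj => ?_
  · obtain ⟨i, hi⟩ := ha
    exact ⟨i, pow_ne_zero 2 hi⟩
  have hlI : ∀ k, a k ^ 2 ≠ 0 → lam k ∈ Set.Icc lmin lmax :=
    fun k hk => hl k fun h => hk (by simp [ha0 k h])
  obtain ⟨hi1, hi2⟩ := hlI i hi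
  obtain ⟨hj1, hj2⟩ := hlI j hj
  have hdiff : |lam i - lam j| ≤ lmax - lmin := abs_sub_le_iff.2 ⟨by linarith, by linarith⟩
  have hquot : |lam i / (1 + lam i * γ) - lam j / (1 + lam j * γ)| ≤ lmax - lmin := by
    have := abs_div_add_mul_sub_div_add_mul_le one_pos (by norm_num : (0 : ℝ) < 1 + 0)
      (mul_nonneg (hlam i) hγ) (mul_nonneg (hlam j) hγ)
    rw [add_zero, div_one] at this
    exact this.trans hdiff
  rw [abs_mul, sq]
  exact mul_le_mul hdiff hquot (abs_nonneg _) ((abs_nonneg _).trans hdiff)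

theorem h2_nonneg {d : ℕ} {s : Fin d → ℝ} {M : ℝ} (hs : ∀ i, 0 ≤ s i) (hM : 0 ≤ M) (γ : ℝ) :
    0 ≤ h2 s M γ := by
  have hA : 0 ≤ ∑ i, s i ^ 2 / (M + s i * γ) ^ 2 := sum_nonneg fun i _ => by positivity
  have hB : 0 ≤ ∑ i, s i ^ 3 / (M + s i * γ) ^ 2 :=
    sum_nonneg fun i _ => div_nonneg (pow_nonneg (hs i) 3) (sq_nonneg _)
  unfold h2
  positivity

theorem h2_eq_centerMass {d : ℕ} [Nonempty (Fin d)] {s : Fin d → ℝ} {M t : ℝ}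
    (hs : ∀ i, 0 < s i) (hM : 0 ≤ M) (ht : ∀ i, M + s i * t ≠ 0) :
    h2 s M t = univ.centerMass (fun i => (M + s i * 1) * s i ^ 2 / (M + s i * t) ^ 2)
      (fun i => s i / (M + s i * 1)) := by
  set A := ∑ i, s i ^ 2 / (M + s i * t) ^ 2
  set B := ∑ i, s i ^ 3 / (M + s i * t) ^ 2
  have hB : 0 < B :=
    sum_pos (fun i _ => div_pos (pow_pos (hs i) 3) (sq_pos_of_ne_zero (ht i))) univ_nonempty
  have hweight : ∑ i, (M + s i * 1) * s i ^ 2 / (M + s i * t) ^ 2 = B + M * A := by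
    rw [mul_sum, ← sum_add_distrib]
    exact sum_congr rfl fun i _ => by ring
  have hnum : ∑ i, ((M + s i * 1) * s i ^ 2 / (M + s i * t) ^ 2) • (s i / (M + s i * 1)) = B := by
    refine sum_congr rfl fun i _ => ?_
    have : M + s i ≠ 0 := by have := hs i; positivity
    rw [smul_eq_mul, mul_one]
    field_simp
  rw [centerMass, hweight, hnum, smul_eq_mul]
  show (1 + M * A * B⁻¹)⁻¹ = _
  field_simp

theorem exists_hasDerivAt_h2_abs_le {d : ℕ} [Nonempty (Fin d)] {s : Fin d → ℝ}
    {M smin smax γ : ℝ} (hs : ∀ i, 0 < s i) (hM : 0 < M) (hsmin : 0 ≤ smin)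
    (hsI : ∀ i, s i ∈ Set.Icc smin smax) (hγ : 1 ≤ γ) :
    ∃ D, HasDerivAt (h2 s M) D γ ∧ |D| ≤ (smax - smin) ^ 2 / (M + smin) ^ 2 := by
  have hpos : ∀ t, 0 < t → ∀ i, 0 < M + s i * t := fun t ht i => by
    have := hs i; positivity
  have heq : h2 s M =ᶠ[nhds γ] fun t => univ.centerMass
      (fun i => (M + s i * 1) * s i ^ 2 / (M + s i * t) ^ 2) (fun i => s i / (M + s i * 1)) :=
    Filter.eventually_of_mem (Ioi_mem_nhds (by linarith : (0 : ℝ) < γ))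
      fun t ht => h2_eq_centerMass hs hM.le fun i => (hpos t ht i).ne'
  have hquot : ∀ t, 1 ≤ t → ∀ i j,
      |s i / (M + s i * t) - s j / (M + s j * t)| ≤ (smax - smin) / (M + smin) := by
    intro t ht i j
    obtain ⟨hi1, hi2⟩ := hsI i
    obtain ⟨hj1, hj2⟩ := hsI j
    have hsit : s i ≤ s i * t := le_mul_of_one_le_right (hs i).le ht
    refine (abs_div_add_mul_sub_div_add_mul_le (m := smin) hM (by linarith) (by linarith)
      (mul_nonneg (hs j).le (by linarith))).trans ?_
    exact div_le_div_of_nonneg_right (abs_sub_le_iff.2 ⟨by linarith, by linarith⟩)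
      (by linarith)
  obtain ⟨D, hD, hDle⟩ := exists_hasDerivAt_centerMass_inv_sq_abs_le
    (c := fun i => (M + s i * 1) * s i ^ 2) (b := fun _ => M) (β := s)
    (x := fun i => s i / (M + s i * 1)) (γ := γ) (K := (smax - smin) ^ 2 / (M + smin) ^ 2)
    (fun i => by have := hs i; positivity) ⟨Classical.arbitrary _, by
      have := hs (Classical.arbitrary _); positivity⟩ (hpos γ (by linarith))
    fun i j _ _ => by
      rw [abs_mul, ← div_pow, sq]
      exact mul_le_mul (hquot 1 le_rfl i j) (hquot γ hγ i j) (abs_nonneg _)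
        ((abs_nonneg _).trans (hquot 1 le_rfl i j))
  exact ⟨D, hD.congr_of_eventuallyEq heq, hDle⟩

theorem stmt5_general (d n : ℕ)
    (s : Fin d → ℝ) (hs : ∀ i, 0 < s i)
    (lam : Fin n → ℝ) (hlam : ∀ i, 0 ≤ lam i)
    (a : Fin n → ℝ) (ha : ∃ i, a i ≠ 0)
    (σ : ℝ)
    (M : ℝ) (hM : M = σ ^ 2 + ∑ i, s i)
    (ha0 : ∀ i, lam i = 0 → a i = 0)
    (smax smin : ℝ)
    (hsmax : IsGreatest (Set.range s) smax) (hsmin : IsLeast (Set.range s) smin)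
    (lmax lmin : ℝ)
    (hlmax : IsGreatest {x | ∃ i, lam i = x ∧ x ≠ 0} lmax)
    (hlmin : IsLeast {x | ∃ i, lam i = x ∧ x ≠ 0} lmin)
    (DS DR : ℝ) (hDS : DS = smax - smin) (hDR : DR = lmax - lmin) :
    (∀ γ : ℝ, 1 ≤ γ →
      DifferentiableAt ℝ (fun t => h1 lam a (h2 s M t)) γ ∧
      |deriv (fun t => h1 lam a (h2 s M t)) γ| ≤ DS ^ 2 * DR ^ 2 / (M + smin) ^ 2) ∧
    (DS * DR < M + smin →
      ∀ γ : ℝ, 1 ≤ γ → |deriv (fun t => h1 lam a (h2 s M t)) γ| < 1) := by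
  obtain ⟨i₀, rfl⟩ := hsmin.1
  have : Nonempty (Fin d) := ⟨i₀⟩
  have hsI : ∀ i, s i ∈ Set.Icc (s i₀) smax := fun i => ⟨hsmin.2 ⟨i, rfl⟩, hsmax.2 ⟨i, rfl⟩⟩
  have hlI : ∀ i, lam i ≠ 0 → lam i ∈ Set.Icc lmin lmax :=
    fun i hi => ⟨hlmin.2 ⟨i, rfl, hi⟩, hlmax.2 ⟨i, rfl, hi⟩⟩
  have hM0 : 0 < M := hM ▸ add_pos_of_nonneg_of_pos (sq_nonneg σ)
    (sum_pos (fun i _ => hs i) univ_nonempty)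
  have hbound : ∀ γ, 1 ≤ γ → ∃ D, HasDerivAt (fun t => h1 lam a (h2 s M t)) D γ ∧
      |D| ≤ DS ^ 2 * DR ^ 2 / (M + s i₀) ^ 2 := by
    intro γ hγ
    obtain ⟨D₂, hD₂, hD₂le⟩ := exists_hasDerivAt_h2_abs_le hs hM0 (hs i₀).le hsI hγ
    obtain ⟨D₁, hD₁, hD₁le⟩ := exists_hasDerivAt_h1_abs_le hlam ha ha0 hlI
      (h2_nonneg (fun i => (hs i).le) hM0.le γ)
    refine ⟨D₁ * D₂, hD₁.comp γ hD₂, ?_⟩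
    rw [abs_mul, hDS, hDR, mul_comm (_ ^ 2), mul_div_assoc]
    exact mul_le_mul hD₁le hD₂le (abs_nonneg _) (sq_nonneg _)
  refine ⟨fun γ hγ => ?_, fun hlt γ hγ => ?_⟩ <;> obtain ⟨D, hD, hDle⟩ := hbound γ hγ
  · exact ⟨hD.differentiableAt, hD.deriv ▸ hDle⟩
  have hDS0 : 0 ≤ DS := hDS ▸ sub_nonneg.2 (hsI i₀).2
  have hDR0 : 0 ≤ DR := hDR ▸ sub_nonneg.2 (hlmin.2 hlmax.1)
  have hMs : 0 < M + s i₀ := add_pos hM0 (hs i₀)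
  rw [hD.deriv]
  refine hDle.trans_lt ((div_lt_one (pow_pos hMs 2)).2 ?_)
  rw [← mul_pow]
  exact pow_lt_pow_left₀ hlt (mul_nonneg hDS0 hDR0) two_ne_zero

/-- Contraction bound. Assuming `aᵢ = 0` whenever `λᵢ = 0`,
the map `γ ↦ h₁(h₂(γ))` is differentiable on `[1, ∞)` with
`|d/dγ h₁(h₂(γ))| ≤ Δ_Σ² Δ_R²/(M + s_min)²`; in particular, if
`Δ_Σ Δ_R < M + s_min` then `|d/dγ h₁(h₂(γ))| < 1` on `[1, ∞)`. -/
theorem stmt5 (d n : ℕ) (hd : 0 < d) (hn : 0 < n)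
    (s : Fin d → ℝ) (hs : ∀ i, 0 < s i)
    (lam : Fin n → ℝ) (hlam : ∀ i, 0 ≤ lam i)
    (a : Fin n → ℝ) (ha : ∃ i, a i ≠ 0)
    (σ : ℝ) (hσ : 0 ≤ σ)
    (M : ℝ) (hM : M = σ ^ 2 + ∑ i, s i)
    (ha0 : ∀ i, lam i = 0 → a i = 0)
    (smax smin : ℝ)
    (hsmax : IsGreatest (Set.range s) smax) (hsmin : IsLeast (Set.range s) smin)
    (lmax lmin : ℝ)
    (hlmax : IsGreatest {x | ∃ i, lam i = x ∧ x ≠ 0} lmax)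
    (hlmin : IsLeast {x | ∃ i, lam i = x ∧ x ≠ 0} lmin)
    (DS DR : ℝ) (hDS : DS = smax - smin) (hDR : DR = lmax - lmin) :
    (∀ γ : ℝ, 1 ≤ γ →
      DifferentiableAt ℝ (fun t => h1 lam a (h2 s M t)) γ ∧
      |deriv (fun t => h1 lam a (h2 s M t)) γ| ≤ DS ^ 2 * DR ^ 2 / (M + smin) ^ 2) ∧
    (DS * DR < M + smin →
      ∀ γ : ℝ, 1 ≤ γ → |deriv (fun t => h1 lam a (h2 s M t)) γ| < 1) :=
  stmt5_general d n s hs lam hlam a ha σ M hM ha0 smax smin hsmax hsmin lmax lmin hlmax hlmin DS DR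
    hDS hDR
end

section
/- For every γ̄ ≥ 0, h₁ is differentiable at γ̄ and h₁'(γ̄) = − (Σ_{i=1}^n a_i²/(1+λ_i γ̄)²)⁻² · Σ_{i=1}^n Σ_{j=1}^n a_i² a_j² (λ_i − λ_j)² / ((1+λ_i γ̄)³ (1+λ_j γ̄)³). -/
/-! Write `h₁ = N/D`. With `cᵢ = 1 + λᵢγ̄` and weights `uᵢ = aᵢ²/cᵢ³`, termwise differentiation
gives `N' = -2 Σᵢ uᵢλᵢ²` and `D' = -2 Σᵢ uᵢλᵢ`, so the numerator of the quotient rule is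
`N'D - ND' = -2 Σᵢⱼ uᵢuⱼ(λᵢ²cⱼ - λᵢλⱼcᵢ) = -2 Σᵢⱼ uᵢuⱼ(λᵢ² - λᵢλⱼ)`: the `γ̄`-terms cancel.
Symmetrizing in `i, j` turns the last double sum into `½ Σᵢⱼ uᵢuⱼ(λᵢ - λⱼ)²`. -/

open Finset

section

variable {ι : Type*} [Fintype ι]

theorem sum_sum_mul_mul_sub_sq_eq_two_mul {R : Type*} [CommRing R] (u x : ι → R) :
    ∑ i, ∑ j, u i * u j * (x i - x j) ^ 2 =
      2 * ∑ i, ∑ j, u i * u j * (x i ^ 2 - x i * x j) := by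
  have hswap : ∑ i, ∑ j, u i * u j * (x j ^ 2 - x j * x i) =
      ∑ i, ∑ j, u i * u j * (x i ^ 2 - x i * x j) := by
    rw [Finset.sum_comm]
    simp only [mul_comm (u _) (u _)]
  calc ∑ i, ∑ j, u i * u j * (x i - x j) ^ 2
      = ∑ i, ∑ j, (u i * u j * (x i ^ 2 - x i * x j) + u i * u j * (x j ^ 2 - x j * x i)) := by
        refine Finset.sum_congr rfl fun i _ => Finset.sum_congr rfl fun j _ => ?_
        ring
    _ = 2 * ∑ i, ∑ j, u i * u j * (x i ^ 2 - x i * x j) := by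
        simp only [Finset.sum_add_distrib, hswap]
        ring

theorem sum_sq_div_sq_pos {a c : ι → ℝ} (ha : ∃ i, a i ≠ 0) (hc : ∀ i, c i ≠ 0) :
    0 < ∑ i, a i ^ 2 / c i ^ 2 := by
  obtain ⟨i₀, hi₀⟩ := ha
  have hc₀ := hc i₀
  exact Finset.sum_pos' (fun i _ => by positivity) ⟨i₀, Finset.mem_univ _, by positivity⟩

theorem hasDerivAt_div_one_add_mul_sq (c l x : ℝ) (hx : 1 + l * x ≠ 0) :
    HasDerivAt (fun y => c / (1 + l * y) ^ 2) (-2 * l * c / (1 + l * x) ^ 3) x := by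
  have hbase : HasDerivAt (fun y => 1 + l * y) l x := by
    simpa using ((hasDerivAt_id x).const_mul l).const_add 1
  refine ((hasDerivAt_const x c).div (hbase.pow 2) (pow_ne_zero 2 hx)).congr_deriv ?_
  simp only [Pi.pow_apply]
  field_simp
  ring

theorem hasDerivAt_sum_div_one_add_mul_sq (c lam : ι → ℝ) {x : ℝ}
    (hx : ∀ i, 1 + lam i * x ≠ 0) :
    HasDerivAt (fun y => ∑ i, c i / (1 + lam i * y) ^ 2)
      (∑ i, -2 * lam i * c i / (1 + lam i * x) ^ 3) x :=
  HasDerivAt.fun_sum fun i _ => hasDerivAt_div_one_add_mul_sq (c i) (lam i) x (hx i)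

theorem quotient_numerator_eq_neg_sum_sum (lam a : ι → ℝ) {x : ℝ}
    (hx : ∀ i, 1 + lam i * x ≠ 0) :
    (∑ i, -2 * lam i * (lam i * a i ^ 2) / (1 + lam i * x) ^ 3) *
        (∑ i, a i ^ 2 / (1 + lam i * x) ^ 2) -
      (∑ i, lam i * a i ^ 2 / (1 + lam i * x) ^ 2) *
        (∑ i, -2 * lam i * a i ^ 2 / (1 + lam i * x) ^ 3) =
      -∑ i, ∑ j, a i ^ 2 * a j ^ 2 * (lam i - lam j) ^ 2 /
        ((1 + lam i * x) ^ 3 * (1 + lam j * x) ^ 3) := by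
  set u : ι → ℝ := fun i => a i ^ 2 / (1 + lam i * x) ^ 3
  have hsum : ∑ i, ∑ j, a i ^ 2 * a j ^ 2 * (lam i - lam j) ^ 2 /
      ((1 + lam i * x) ^ 3 * (1 + lam j * x) ^ 3) =
      ∑ i, ∑ j, u i * u j * (lam i - lam j) ^ 2 := by
    refine Finset.sum_congr rfl fun i _ => Finset.sum_congr rfl fun j _ => ?_
    have hi := hx i
    have hj := hx j
    simp only [u]
    field_simp
  rw [hsum, sum_sum_mul_mul_sub_sq_eq_two_mul, Finset.sum_mul_sum, Finset.sum_mul_sum,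
    ← Finset.sum_sub_distrib, Finset.mul_sum, ← Finset.sum_neg_distrib]
  refine Finset.sum_congr rfl fun i _ => ?_
  rw [← Finset.sum_sub_distrib, Finset.mul_sum, ← Finset.sum_neg_distrib]
  refine Finset.sum_congr rfl fun j _ => ?_
  have hi := hx i
  have hj := hx j
  simp only [u]
  field_simp
  ring

end

theorem stmt7_general (n : ℕ)
    (lam : Fin n → ℝ) (hlam : ∀ i, 0 ≤ lam i)
    (a : Fin n → ℝ) (ha : ∃ i, a i ≠ 0) :
    ∀ γ : ℝ, 0 ≤ γ →
      HasDerivAt (h1 lam a)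
        (-(((∑ i, a i ^ 2 / (1 + lam i * γ) ^ 2) ^ 2)⁻¹ *
          ∑ i, ∑ j, a i ^ 2 * a j ^ 2 * (lam i - lam j) ^ 2 /
            ((1 + lam i * γ) ^ 3 * (1 + lam j * γ) ^ 3))) γ := by
  intro γ hγ
  have hc : ∀ i, 1 + lam i * γ ≠ 0 := fun i => by
    have := mul_nonneg (hlam i) hγ
    positivity
  have hD := (sum_sq_div_sq_pos ha hc).ne'
  have hquot := (hasDerivAt_sum_div_one_add_mul_sq (fun i => lam i * a i ^ 2) lam hc).div
    (hasDerivAt_sum_div_one_add_mul_sq (fun i => a i ^ 2) lam hc) hD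
  refine (hquot.congr_of_eventuallyEq
    (.of_forall fun _ => (div_eq_mul_inv _ _).symm)).congr_deriv ?_
  rw [quotient_numerator_eq_neg_sum_sum lam a hc, neg_div, div_eq_inv_mul]

/-- Derivative of `h₁`. For every `γ̄ ≥ 0`, `h₁` is
differentiable at `γ̄` with
`h₁'(γ̄) = −(Σᵢ aᵢ²/(1+λᵢγ̄)²)⁻² · Σᵢ Σⱼ aᵢ²aⱼ²(λᵢ−λⱼ)²/((1+λᵢγ̄)³(1+λⱼγ̄)³)`. -/
theorem stmt7 (n : ℕ) (hn : 0 < n)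
    (lam : Fin n → ℝ) (hlam : ∀ i, 0 ≤ lam i)
    (a : Fin n → ℝ) (ha : ∃ i, a i ≠ 0) :
    ∀ γ : ℝ, 0 ≤ γ →
      HasDerivAt (h1 lam a)
        (-(((∑ i, a i ^ 2 / (1 + lam i * γ) ^ 2) ^ 2)⁻¹ *
          ∑ i, ∑ j, a i ^ 2 * a j ^ 2 * (lam i - lam j) ^ 2 /
            ((1 + lam i * γ) ^ 3 * (1 + lam j * γ) ^ 3))) γ :=
  stmt7_general n lam hlam a ha
end

section
/- Define B(γ) = Σ_{i=1}^d s_i³/(M + s_i γ)² and C(γ) = Σ_{i=1}^d s_i²/(M + s_i γ)² for γ ≥ 0. Then for every γ ≥ 0, C'(γ)·B(γ) − C(γ)·B'(γ) = M · Σ_{i=1}^d Σ_{j=1}^d s_i² s_j² (s_i − s_j)² / ((M + s_i γ)³ (M + s_j γ)³). -/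
/-! Expanding the products `C'B` and `CB'` gives a double sum over `(i, j)` whose terms are not
individually of the claimed form; after symmetrizing in `(i, j)` they are, because
`sⱼ(M + sᵢγ) − sᵢ(M + sⱼγ) = M(sⱼ − sᵢ)`. -/

open Finset

/-- `B(γ) = Σᵢ sᵢ³/(M + sᵢγ)²`. -/
noncomputable def Bfun {d : ℕ} (s : Fin d → ℝ) (M γ : ℝ) : ℝ :=
  ∑ i, s i ^ 3 / (M + s i * γ) ^ 2

/-- `C(γ) = Σᵢ sᵢ²/(M + sᵢγ)²`. -/
noncomputable def Cfun {d : ℕ} (s : Fin d → ℝ) (M γ : ℝ) : ℝ :=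
  ∑ i, s i ^ 2 / (M + s i * γ) ^ 2

theorem Finset.sum_sum_eq_of_add_swap_eq_two_nsmul {ι M : Type*} [AddCommMonoid M]
    [IsAddTorsionFree M] (s : Finset ι) {f g : ι → ι → M}
    (h : ∀ i j, f i j + f j i = 2 • g i j) :
    ∑ i ∈ s, ∑ j ∈ s, f i j = ∑ i ∈ s, ∑ j ∈ s, g i j := by
  refine nsmul_right_injective two_ne_zero ?_
  calc 2 • ∑ i ∈ s, ∑ j ∈ s, f i j
      = ∑ i ∈ s, ∑ j ∈ s, f i j + ∑ i ∈ s, ∑ j ∈ s, f j i := by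
        rw [two_nsmul, sum_comm (f := fun j i => f i j)]
    _ = ∑ i ∈ s, ∑ j ∈ s, 2 • g i j := by simp only [← sum_add_distrib, h]
    _ = 2 • ∑ i ∈ s, ∑ j ∈ s, g i j := by simp only [smul_sum]

theorem hasDerivAt_div_affine_sq (a c M x : ℝ) (hx : M + c * x ≠ 0) :
    HasDerivAt (fun y => a / (M + c * y) ^ 2) (-2 * a * c / (M + c * x) ^ 3) x := by
  have h_affine : HasDerivAt (fun y => M + c * y) c x := by
    simpa using ((hasDerivAt_id x).const_mul c).const_add M
  refine ((hasDerivAt_const x a).fun_div (h_affine.fun_pow 2) (pow_ne_zero 2 hx)).congr_deriv ?_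
  field_simp
  ring

theorem deriv_sum_div_affine_sq {d : ℕ} (s : Fin d → ℝ) (M x : ℝ) (k : ℕ)
    (hx : ∀ i, M + s i * x ≠ 0) :
    deriv (fun y => ∑ i, s i ^ k / (M + s i * y) ^ 2) x
      = ∑ i, -2 * s i ^ (k + 1) / (M + s i * x) ^ 3 := by
  refine (HasDerivAt.fun_sum fun i _ => ?_).deriv
  exact (hasDerivAt_div_affine_sq (s i ^ k) (s i) M x (hx i)).congr_deriv (by ring)

theorem cross_term_add_swap (M γ x y : ℝ) :
    (-2 * x ^ 3 / (M + x * γ) ^ 3 * (y ^ 3 / (M + y * γ) ^ 2)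
        - x ^ 2 / (M + x * γ) ^ 2 * (-2 * y ^ 4 / (M + y * γ) ^ 3))
      + (-2 * y ^ 3 / (M + y * γ) ^ 3 * (x ^ 3 / (M + x * γ) ^ 2)
        - y ^ 2 / (M + y * γ) ^ 2 * (-2 * x ^ 4 / (M + x * γ) ^ 3))
      = 2 • (M * (x ^ 2 * y ^ 2 * (x - y) ^ 2 / ((M + x * γ) ^ 3 * (M + y * γ) ^ 3))) := by
  rw [two_nsmul]
  field_simp
  ring

theorem stmt8_general (d : ℕ) (s : Fin d → ℝ) (hs : ∀ i, 0 < s i)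
    (M : ℝ) (hM : 0 < M) :
    ∀ γ : ℝ, 0 ≤ γ →
      deriv (Cfun s M) γ * Bfun s M γ - Cfun s M γ * deriv (Bfun s M) γ
        = M * ∑ i, ∑ j, s i ^ 2 * s j ^ 2 * (s i - s j) ^ 2 /
            ((M + s i * γ) ^ 3 * (M + s j * γ) ^ 3) := by
  intro γ hγ
  have hne : ∀ i, M + s i * γ ≠ 0 := fun i =>
    (add_pos_of_pos_of_nonneg hM (mul_nonneg (hs i).le hγ)).ne'
  have hC : deriv (Cfun s M) γ = ∑ i, -2 * s i ^ 3 / (M + s i * γ) ^ 3 :=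
    deriv_sum_div_affine_sq s M γ 2 hne
  have hB : deriv (Bfun s M) γ = ∑ i, -2 * s i ^ 4 / (M + s i * γ) ^ 3 :=
    deriv_sum_div_affine_sq s M γ 3 hne
  rw [hC, hB, Cfun, Bfun, sum_mul_sum, sum_mul_sum]
  simp only [← sum_sub_distrib, mul_sum]
  exact sum_sum_eq_of_add_swap_eq_two_nsmul _ fun i j => cross_term_add_swap M γ _ _

/-- For every `γ ≥ 0`,
`C'(γ)B(γ) − C(γ)B'(γ) = M · Σᵢ Σⱼ sᵢ²sⱼ²(sᵢ−sⱼ)²/((M+sᵢγ)³(M+sⱼγ)³)`. -/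
theorem stmt8 (d : ℕ) (hd : 0 < d) (s : Fin d → ℝ) (hs : ∀ i, 0 < s i)
    (M : ℝ) (hM : 0 < M) :
    ∀ γ : ℝ, 0 ≤ γ →
      deriv (Cfun s M) γ * Bfun s M γ - Cfun s M γ * deriv (Bfun s M) γ
        = M * ∑ i, ∑ j, s i ^ 2 * s j ^ 2 * (s i - s j) ^ 2 /
            ((M + s i * γ) ^ 3 * (M + s j * γ) ^ 3) :=
  stmt8_general d s hs M hM
end

section
/- Suppose Σ = I_d and r ≠ 0, so that M = σ² + d. Set ω* = (R + (d + σ² + 1)·I_n)⁻¹ r. Then (I_d, ω*) is a global minimizer of L, and the minimum value is L(I_d, ω*) = (σ² + d) − d · rᵀ (R + (d + σ² + 1)·I_n)⁻¹ r. -/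
/-! With `Σ = I` the risk reads `M − 2·tr P·(ωᵀr) + q(ω)·tr(PᵀP)`, where `q(ω) = ωᵀAω` and
`A = R + (M + 1)I` is positive definite. Cauchy–Schwarz gives `tr(PᵀP) ≥ (tr P)²/d`, so the risk
is at least `M − d·(2vᵀr − q(v))` for `v = (tr P / d)·ω`; the concave quadratic `2vᵀr − q(v)` is
maximised at `v = A⁻¹r = ω*` with value `ω*ᵀr`. Both bounds are attained at `(I, ω*)`. -/

open Finset Matrix

/-- The closed-form WPGD risk
`L(P, ω) = M − 2·tr(Σ²P)·(ωᵀr) + M·‖ω‖²·tr(ΣPᵀΣP) + (‖ω‖² + ωᵀRω)·tr(Σ²PᵀΣP)`. -/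
noncomputable def Lrisk {d n : ℕ} (Sg : Matrix (Fin d) (Fin d) ℝ)
    (R : Matrix (Fin n) (Fin n) ℝ) (r : Fin n → ℝ) (M : ℝ)
    (P : Matrix (Fin d) (Fin d) ℝ) (w : Fin n → ℝ) : ℝ :=
  M - 2 * Matrix.trace (Sg ^ 2 * P) * (w ⬝ᵥ r)
    + M * (∑ i, w i ^ 2) * Matrix.trace (Sg * Pᵀ * Sg * P)
    + ((∑ i, w i ^ 2) + w ⬝ᵥ (R *ᵥ w)) * Matrix.trace (Sg ^ 2 * Pᵀ * Sg * P)

theorem Matrix.sq_trace_le_card_mul_trace_transpose_mul {𝕜 ι : Type*} [Field 𝕜] [LinearOrder 𝕜]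
    [IsStrictOrderedRing 𝕜] [Fintype ι] (P : Matrix ι ι 𝕜) :
    P.trace ^ 2 ≤ Fintype.card ι * (Pᵀ * P).trace := by
  calc P.trace ^ 2 ≤ Fintype.card ι * ∑ i, P i i ^ 2 := sq_sum_le_card_mul_sum_sq
    _ ≤ Fintype.card ι * ∑ i, ∑ j, P j i ^ 2 := by
      gcongr with i
      exact Finset.single_le_sum (fun j _ => sq_nonneg (P j i)) (Finset.mem_univ i)
    _ = Fintype.card ι * (Pᵀ * P).trace := by
      simp [Matrix.trace, Matrix.mul_apply, sq]

theorem Matrix.PosSemidef.two_mul_dotProduct_sub_le {ι : Type*} [Fintype ι]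
    {A : Matrix ι ι ℝ} (hA : A.PosSemidef) {x b : ι → ℝ} (hx : A *ᵥ x = b) (v : ι → ℝ) :
    2 * (v ⬝ᵥ b) - v ⬝ᵥ (A *ᵥ v) ≤ x ⬝ᵥ b := by
  have hsymm : x ⬝ᵥ (A *ᵥ v) = v ⬝ᵥ b := by
    rw [← hx, dotProduct_mulVec, ← mulVec_transpose, ← conjTranspose_eq_transpose_of_trivial,
      hA.isHermitian.eq, dotProduct_comm]
  have h := hA.dotProduct_mulVec_nonneg (v - x)
  simp only [star_trivial, mulVec_sub, sub_dotProduct, dotProduct_sub, hsymm, hx] at h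
  linarith

section
variable {d n : ℕ} (R : Matrix (Fin n) (Fin n) ℝ) (r : Fin n → ℝ) (M : ℝ)

theorem Lrisk_one_eq (P : Matrix (Fin d) (Fin d) ℝ) (w : Fin n → ℝ) :
    Lrisk 1 R r M P w =
      M - 2 * P.trace * (w ⬝ᵥ r) + w ⬝ᵥ ((R + (M + 1) • 1) *ᵥ w) * (Pᵀ * P).trace := by
  have hsum : ∑ i, w i ^ 2 = w ⬝ᵥ w := by simp [dotProduct, sq]
  simp only [Lrisk, hsum, one_pow, Matrix.one_mul, Matrix.mul_one, add_mulVec, smul_mulVec,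
    one_mulVec, dotProduct_add, dotProduct_smul, smul_eq_mul]
  ring

variable {R r M}

theorem Lrisk_one_one_eq {x : Fin n → ℝ} (hx : (R + (M + 1) • 1) *ᵥ x = r) :
    Lrisk 1 R r M (1 : Matrix (Fin d) (Fin d) ℝ) x = M - d * (x ⬝ᵥ r) := by
  rw [Lrisk_one_eq, hx, transpose_one, Matrix.one_mul, trace_one, Fintype.card_fin]
  ring

theorem le_Lrisk_one (hd : 0 < d) (hA : (R + (M + 1) • 1).PosSemidef) {x : Fin n → ℝ}
    (hx : (R + (M + 1) • 1) *ᵥ x = r) (P : Matrix (Fin d) (Fin d) ℝ) (w : Fin n → ℝ) :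
    M - d * (x ⬝ᵥ r) ≤ Lrisk 1 R r M P w := by
  rw [Lrisk_one_eq]
  set q := w ⬝ᵥ ((R + (M + 1) • 1) *ᵥ w)
  set t := P.trace
  have hq : 0 ≤ q := by simpa using hA.dotProduct_mulVec_nonneg w
  have hd' : (0 : ℝ) < d := by exact_mod_cast hd
  have htr : t ^ 2 ≤ d * (Pᵀ * P).trace := by
    simpa using P.sq_trace_le_card_mul_trace_transpose_mul
  have hmin := hA.two_mul_dotProduct_sub_le hx ((t / d) • w)
  simp only [mulVec_smul, dotProduct_smul, smul_dotProduct, smul_eq_mul] at hmin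
  have hts : q * t ^ 2 / d ≤ q * (Pᵀ * P).trace := by
    rw [div_le_iff₀ hd']
    nlinarith
  calc M - d * (x ⬝ᵥ r) ≤ M - d * (2 * (t / d * (w ⬝ᵥ r)) - t / d * (t / d * q)) := by
        gcongr
    _ = M - 2 * t * (w ⬝ᵥ r) + q * t ^ 2 / d := by
        field_simp
        ring
    _ ≤ M - 2 * t * (w ⬝ᵥ r) + q * (Pᵀ * P).trace := by linarith
end

theorem stmt16_general (d n : ℕ) (hd : 0 < d) (σ : ℝ)
    (Sg : Matrix (Fin d) (Fin d) ℝ)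
    (R : Matrix (Fin n) (Fin n) ℝ) (hRpsd : R.PosSemidef)
    (r : Fin n → ℝ)
    (M : ℝ) (hM : M = σ ^ 2 + Matrix.trace Sg)
    (hSgI : Sg = 1)
    (ωstar : Fin n → ℝ)
    (hωstar : ωstar = (R + ((d : ℝ) + σ ^ 2 + 1) • (1 : Matrix (Fin n) (Fin n) ℝ))⁻¹ *ᵥ r) :
    (∀ (P : Matrix (Fin d) (Fin d) ℝ) (w : Fin n → ℝ),
      Lrisk Sg R r M 1 ωstar ≤ Lrisk Sg R r M P w) ∧
    Lrisk Sg R r M 1 ωstar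
      = (σ ^ 2 + (d : ℝ))
        - (d : ℝ) * (r ⬝ᵥ ((R + ((d : ℝ) + σ ^ 2 + 1) • (1 : Matrix (Fin n) (Fin n) ℝ))⁻¹ *ᵥ r)) := by
  subst hSgI
  have hMd : M = σ ^ 2 + d := by simpa using hM
  have hc : (d : ℝ) + σ ^ 2 + 1 = M + 1 := by rw [hMd]; ring
  rw [hc] at hωstar ⊢
  have hA : (R + (M + 1) • 1).PosDef :=
    .posSemidef_add hRpsd (.smul .one (by rw [hMd]; positivity))
  have hx : (R + (M + 1) • 1) *ᵥ ωstar = r := by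
    rw [hωstar, mulVec_mulVec, mul_nonsing_inv _ ((isUnit_iff_isUnit_det _).mp hA.isUnit),
      one_mulVec]
  refine ⟨fun P w => (Lrisk_one_one_eq hx).trans_le (le_Lrisk_one hd hA.posSemidef hx P w), ?_⟩
  rw [Lrisk_one_one_eq hx, ← hωstar, dotProduct_comm, hMd]

/-- For `Σ = I_d` (so `M = σ² + d`) and
`ω* = (R + (d + σ² + 1)I)⁻¹r`, the pair `(I_d, ω*)` is a global minimizer of `L`
with minimum value `(σ² + d) − d·rᵀ(R + (d + σ² + 1)I)⁻¹r`. -/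
theorem stmt16 (d n : ℕ) (hd : 0 < d) (hn : 0 < n) (σ : ℝ) (hσ : 0 ≤ σ)
    (Sg : Matrix (Fin d) (Fin d) ℝ) (hSgsym : Sg.IsSymm) (hSgpd : Sg.PosDef)
    (R : Matrix (Fin n) (Fin n) ℝ) (hRsym : R.IsSymm) (hRpsd : R.PosSemidef)
    (r : Fin n → ℝ) (hr : r ≠ 0)
    (M : ℝ) (hM : M = σ ^ 2 + Matrix.trace Sg)
    (hSgI : Sg = 1)
    (ωstar : Fin n → ℝ)
    (hωstar : ωstar = (R + ((d : ℝ) + σ ^ 2 + 1) • (1 : Matrix (Fin n) (Fin n) ℝ))⁻¹ *ᵥ r) :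
    (∀ (P : Matrix (Fin d) (Fin d) ℝ) (w : Fin n → ℝ),
      Lrisk Sg R r M 1 ωstar ≤ Lrisk Sg R r M P w) ∧
    Lrisk Sg R r M 1 ωstar
      = (σ ^ 2 + (d : ℝ))
        - (d : ℝ) * (r ⬝ᵥ ((R + ((d : ℝ) + σ ^ 2 + 1) • (1 : Matrix (Fin n) (Fin n) ℝ))⁻¹ *ᵥ r)) :=
  stmt16_general d n hd σ Sg R hRpsd r M hM hSgI ωstar hωstar
end

section
/- Suppose Σ = I_d, so that M = σ² + d, and let 1_n ∈ ℝⁿ denote the all-ones vector. Set c = (1_nᵀ r) / (n(d + σ² + 1) + 1_nᵀ R 1_n). Then for every P ∈ ℝ^{d×d}, L(P, 1_n) ≥ (d + σ²) − c·d·(1_nᵀ r), with equality if and only if P = c·I_d. -/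
open Finset Matrix

/-!
With `Σ = I` and `ω = 1_n` the risk is the convex quadratic
`M − 2 (1ᵀr) tr P + K ‖P‖_F²` in `P`, where `K = n(M + 1) + 1ᵀR1 > 0`. Completing the square
around `c I = (1ᵀr / K) I` rewrites it as `M − c d (1ᵀr) + K ‖P − c I‖_F²`, and the Frobenius norm
vanishes only at `0`.
-/

namespace Matrix

variable {m ι : Type*} [Fintype m] [Fintype ι]

theorem trace_transpose_mul_self_nonneg (A : Matrix m ι ℝ) : 0 ≤ trace (Aᵀ * A) := by
  simpa only [conjTranspose_eq_transpose_of_trivial] using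
    (posSemidef_conjTranspose_mul_self A).trace_nonneg

theorem trace_transpose_mul_self_eq_zero_iff {A : Matrix m ι ℝ} :
    trace (Aᵀ * A) = 0 ↔ A = 0 := by
  simpa only [conjTranspose_eq_transpose_of_trivial] using
    trace_conjTranspose_mul_self_eq_zero_iff (A := A)

theorem PosSemidef.sum_sum_nonneg {A : Matrix ι ι ℝ} (hA : A.PosSemidef) :
    0 ≤ ∑ i, ∑ j, A i j := by
  simpa [dotProduct, mulVec, Finset.sum_comm] using hA.dotProduct_mulVec_nonneg (fun _ => 1)

theorem trace_transpose_mul_self_sub_smul_one {R : Type*} [CommRing R] [DecidableEq ι]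
    (P : Matrix ι ι R) (c : R) :
    trace ((P - c • 1)ᵀ * (P - c • 1))
      = trace (Pᵀ * P) - 2 * c * trace P + c ^ 2 * Fintype.card ι := by
  simp only [transpose_sub, transpose_smul, transpose_one, sub_mul, mul_sub, smul_mul,
    Matrix.mul_smul, Matrix.one_mul, Matrix.mul_one, smul_smul, trace_sub, trace_smul,
    trace_transpose, trace_one, smul_eq_mul]
  ring

theorem sub_two_mul_trace_add_mul_trace_eq {R : Type*} [CommRing R] [DecidableEq ι]
    (P : Matrix ι ι R) {M s K c : R} (hcK : c * K = s) :
    M - 2 * s * trace P + K * trace (Pᵀ * P)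
      = M - c * Fintype.card ι * s + K * trace ((P - c • 1)ᵀ * (P - c • 1)) := by
  rw [trace_transpose_mul_self_sub_smul_one, ← hcK]
  ring

end Matrix

theorem Lrisk_one_ones {d n : ℕ} (R : Matrix (Fin n) (Fin n) ℝ) (r : Fin n → ℝ) (M : ℝ)
    (P : Matrix (Fin d) (Fin d) ℝ) :
    Lrisk 1 R r M P (fun _ => 1)
      = M - 2 * (∑ i, r i) * trace P + (n * (M + 1) + ∑ i, ∑ j, R i j) * trace (Pᵀ * P) := by
  simp only [Lrisk, one_pow, dotProduct, mulVec, one_mul, mul_one,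
    sum_const, card_univ, Fintype.card_fin, nsmul_eq_mul]
  ring

theorem stmt17_general (d n : ℕ) (hn : 0 < n) (σ : ℝ)
    (Sg : Matrix (Fin d) (Fin d) ℝ)
    (R : Matrix (Fin n) (Fin n) ℝ) (hRpsd : R.PosSemidef)
    (r : Fin n → ℝ)
    (M : ℝ) (hM : M = σ ^ 2 + Matrix.trace Sg)
    (hSgI : Sg = 1)
    (c : ℝ)
    (hc : c = (∑ i, r i) / ((n : ℝ) * ((d : ℝ) + σ ^ 2 + 1) + ∑ i, ∑ j, R i j)) :
    ∀ P : Matrix (Fin d) (Fin d) ℝ,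
      ((d : ℝ) + σ ^ 2) - c * (d : ℝ) * (∑ i, r i) ≤ Lrisk Sg R r M P (fun _ => 1) ∧
      (Lrisk Sg R r M P (fun _ => 1) = ((d : ℝ) + σ ^ 2) - c * (d : ℝ) * (∑ i, r i)
        ↔ P = c • (1 : Matrix (Fin d) (Fin d) ℝ)) := by
  subst hSgI
  intro P
  set K := (n : ℝ) * ((d : ℝ) + σ ^ 2 + 1) + ∑ i, ∑ j, R i j
  have hK : 0 < K :=
    add_pos_of_pos_of_nonneg (mul_pos (Nat.cast_pos.mpr hn) (by positivity)) hRpsd.sum_sum_nonneg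
  have hM' : M = d + σ ^ 2 := by rw [hM, trace_one, Fintype.card_fin, add_comm]
  have hL : Lrisk 1 R r M P (fun _ => 1)
      = (d + σ ^ 2) - c * d * ∑ i, r i + K * trace ((P - c • 1)ᵀ * (P - c • 1)) := by
    rw [Lrisk_one_ones, hM', sub_two_mul_trace_add_mul_trace_eq P (hc ▸ div_mul_cancel₀ _ hK.ne'),
      Fintype.card_fin]
  rw [hL]
  refine ⟨le_add_of_nonneg_right (mul_nonneg hK.le (trace_transpose_mul_self_nonneg _)), ?_⟩
  rw [add_eq_left, mul_eq_zero, or_iff_right hK.ne', trace_transpose_mul_self_eq_zero_iff,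
    sub_eq_zero]

/-- For `Σ = I_d` and the all-ones weighting `1_n`, with
`c = (1ᵀr)/(n(d + σ² + 1) + 1ᵀR1)`, every `P` satisfies
`L(P, 1_n) ≥ (d + σ²) − c·d·(1ᵀr)`, with equality iff `P = c·I_d`. -/
theorem stmt17 (d n : ℕ) (hd : 0 < d) (hn : 0 < n) (σ : ℝ) (hσ : 0 ≤ σ)
    (Sg : Matrix (Fin d) (Fin d) ℝ) (hSgsym : Sg.IsSymm) (hSgpd : Sg.PosDef)
    (R : Matrix (Fin n) (Fin n) ℝ) (hRsym : R.IsSymm) (hRpsd : R.PosSemidef)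
    (r : Fin n → ℝ)
    (M : ℝ) (hM : M = σ ^ 2 + Matrix.trace Sg)
    (hSgI : Sg = 1)
    (c : ℝ)
    (hc : c = (∑ i, r i) / ((n : ℝ) * ((d : ℝ) + σ ^ 2 + 1) + ∑ i, ∑ j, R i j)) :
    ∀ P : Matrix (Fin d) (Fin d) ℝ,
      ((d : ℝ) + σ ^ 2) - c * (d : ℝ) * (∑ i, r i) ≤ Lrisk Sg R r M P (fun _ => 1) ∧
      (Lrisk Sg R r M P (fun _ => 1) = ((d : ℝ) + σ ^ 2) - c * (d : ℝ) * (∑ i, r i)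
        ↔ P = c • (1 : Matrix (Fin d) (Fin d) ℝ)) :=
  stmt17_general d n hn σ Sg R hRpsd r M hM hSgI c hc
end

section
/- For every h ≥ 0, the vector ω = (h·R + I_n)⁻¹ r is nonzero and satisfies (ωᵀ R ω) / ‖ω‖² = (Σ_{i=1}^n λ_i a_i² / (1 + h λ_i)²) · (Σ_{i=1}^n a_i² / (1 + h λ_i)²)⁻¹. -/
open Finset Matrix

/-- With `R = E diag(λ) Eᵀ` (`E` orthogonal, `λ ≥ 0`) and
`r = Ea` for `a ≠ 0`, for every `h ≥ 0` the vector `ω = (hR + I)⁻¹r` is nonzero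
and `(ωᵀRω)/‖ω‖² = (Σᵢ λᵢaᵢ²/(1+hλᵢ)²)·(Σᵢ aᵢ²/(1+hλᵢ)²)⁻¹`. -/
theorem stmt19 (n : ℕ) (hn : 0 < n)
    (E : Matrix (Fin n) (Fin n) ℝ) (hE : Eᵀ * E = 1)
    (lam : Fin n → ℝ) (hlam : ∀ i, 0 ≤ lam i)
    (R : Matrix (Fin n) (Fin n) ℝ) (hR : R = E * Matrix.diagonal lam * Eᵀ)
    (a : Fin n → ℝ) (ha : a ≠ 0)
    (r : Fin n → ℝ) (hr : r = E *ᵥ a) :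
    ∀ h : ℝ, 0 ≤ h →
      (h • R + 1)⁻¹ *ᵥ r ≠ 0 ∧
      (((h • R + 1)⁻¹ *ᵥ r) ⬝ᵥ (R *ᵥ ((h • R + 1)⁻¹ *ᵥ r)))
          / (∑ i, ((h • R + 1)⁻¹ *ᵥ r) i ^ 2)
        = (∑ i, lam i * a i ^ 2 / (1 + h * lam i) ^ 2)
          * (∑ i, a i ^ 2 / (1 + h * lam i) ^ 2)⁻¹ := by
  intro h hh
  have hEE : E * Eᵀ = 1 := mul_eq_one_comm.mp hE
  set d : Fin n → ℝ := fun i => 1 + h * lam i with hd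
  have hdpos : ∀ i, 0 < d i := fun i => by
    have := mul_nonneg hh (hlam i); simp only [hd]; linarith
  have hdne : ∀ i, d i ≠ 0 := fun i => (hdpos i).ne'
  have hM : h • R + 1 = E * Matrix.diagonal d * Eᵀ := by
    have hdiag : Matrix.diagonal d = h • Matrix.diagonal lam + 1 := by
      ext i j
      by_cases hij : i = j <;>
        simp [hd, Matrix.diagonal, hij, Matrix.one_apply] <;> ring
    rw [hR, hdiag]
    rw [Matrix.mul_add, Matrix.add_mul, Matrix.mul_one, hEE]
    rw [Matrix.mul_smul, Matrix.smul_mul]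
  have hinv : (h • R + 1)⁻¹ = E * Matrix.diagonal (fun i => (d i)⁻¹) * Eᵀ := by
    apply Matrix.inv_eq_right_inv
    rw [hM]
    have : Eᵀ * (E * Matrix.diagonal (fun i => (d i)⁻¹) * Eᵀ)
        = Matrix.diagonal (fun i => (d i)⁻¹) * Eᵀ := by
      rw [← Matrix.mul_assoc, ← Matrix.mul_assoc, hE, Matrix.one_mul]
    rw [Matrix.mul_assoc (E * Matrix.diagonal d)]
    rw [Matrix.mul_assoc E (Matrix.diagonal d)]
    rw [this]
    rw [← Matrix.mul_assoc (Matrix.diagonal d)]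
    rw [Matrix.diagonal_mul_diagonal]
    have hone : (fun i => d i * (d i)⁻¹) = fun _ => (1:ℝ) := by
      funext i; exact mul_inv_cancel₀ (hdne i)
    rw [hone, Matrix.diagonal_one, Matrix.one_mul, hEE]
  set b : Fin n → ℝ := fun i => (d i)⁻¹ * a i with hb
  have hω : (h • R + 1)⁻¹ *ᵥ r = E *ᵥ b := by
    have hda : (Matrix.diagonal fun i => (d i)⁻¹) *ᵥ a = b := by
      funext i; rw [Matrix.mulVec_diagonal]
    rw [hinv, hr, Matrix.mulVec_mulVec, Matrix.mul_assoc, hE, Matrix.mul_one,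
      ← Matrix.mulVec_mulVec, hda]
  have hbne : b ≠ 0 := by
    intro hb0
    apply ha
    funext i
    have : b i = 0 := congrFun hb0 i
    simpa [hb, hdne i] using this
  have hωne : (h • R + 1)⁻¹ *ᵥ r ≠ 0 := by
    rw [hω]
    intro h0
    apply hbne
    have : Eᵀ *ᵥ (E *ᵥ b) = 0 := by rw [h0]; simp
    rwa [Matrix.mulVec_mulVec, hE, Matrix.one_mulVec] at this
  refine ⟨hωne, ?_⟩
  have hdot : ∀ x y : Fin n → ℝ, (E *ᵥ x) ⬝ᵥ (E *ᵥ y) = x ⬝ᵥ y := by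
    intro x y
    rw [Matrix.dotProduct_mulVec, ← Matrix.mulVec_transpose,
      Matrix.mulVec_mulVec, hE, Matrix.one_mulVec]
  have hRω : R *ᵥ (E *ᵥ b) = E *ᵥ (fun i => lam i * b i) := by
    have hdb : Matrix.diagonal lam *ᵥ b = fun i => lam i * b i := by
      funext i; rw [Matrix.mulVec_diagonal]
    rw [hR, Matrix.mulVec_mulVec, Matrix.mul_assoc, hE, Matrix.mul_one,
      ← Matrix.mulVec_mulVec, hdb]
  rw [hω, hRω, hdot]
  have hsq : ∑ i, (E *ᵥ b) i ^ 2 = b ⬝ᵥ b := by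
    rw [← hdot b b]
    simp [dotProduct, pow_two]
  rw [hsq]
  have h1 : b ⬝ᵥ (fun i => lam i * b i) = ∑ i, lam i * a i ^ 2 / (1 + h * lam i) ^ 2 := by
    simp only [dotProduct, hb, hd]
    refine Finset.sum_congr rfl fun i _ => ?_
    field_simp
  have h2 : b ⬝ᵥ b = ∑ i, a i ^ 2 / (1 + h * lam i) ^ 2 := by
    simp only [dotProduct, hb, hd]
    refine Finset.sum_congr rfl fun i _ => ?_
    field_simp
  rw [h1, h2, div_eq_mul_inv]
end
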